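/- arXiv:2603.09238 — 5 statements merged into one kernel-verified Lean document; each statement's English description precedes it below -/
import Mathlib

section
/- Covering lemma for the random phase derivative (Lemma 2.2). There exist constants δ > 0, c > 0 and C > 0, depending only on b, such that for every t ≥ 1 and every continuous function w : [0,t] → ℝ with sup_{0 ≤ s ≤ t} |w(s)| ≤ δ, the sublevel set A_t(c) := { y ∈ [0,2π) : |S_t(y)| ≤ c t^{1/(N+1)} } is contained in the union of m arcs I_1, …, I_m of the circle T = ℝ/2πℤ, which may be chosen pairwise disjoint with I_i ⊆ B_{2δ}(y_i) for each i, and whose total length satisfies Σ_{i=1}^m |I_i| ≤ C t^{−1/(N+1)}. -/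
open MeasureTheory

/-- The geodesic distance on the circle `ℝ/2πℤ`, computed on representatives. -/
noncomputable def circleDist (y y' : ℝ) : ℝ := ⨅ j : ℤ, |y - y' - 2 * Real.pi * j|

/-- The arc of the circle `ℝ/2πℤ` (viewed as a `2π`-periodic subset of `ℝ`)
obtained by periodizing the open interval `(a, a + l)`. -/
def circleArc (a l : ℝ) : Set ℝ :=
  {y : ℝ | ∃ j : ℤ, y - 2 * Real.pi * j ∈ Set.Ioo a (a + l)}

section Helpers

open Set intervalIntegral

lemma cD_bdd (y y' : ℝ) : BddBelow (Set.range fun j : ℤ => |y - y' - 2 * Real.pi * j|) :=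
  ⟨0, by rintro x ⟨j, rfl⟩; positivity⟩

lemma cD_le (y y' : ℝ) (j : ℤ) : circleDist y y' ≤ |y - y' - 2 * Real.pi * j| :=
  ciInf_le (cD_bdd y y') j

lemma cD_le_abs (y y' : ℝ) : circleDist y y' ≤ |y - y'| := by
  simpa using cD_le y y' 0

lemma cD_nonneg (y y' : ℝ) : 0 ≤ circleDist y y' :=
  le_ciInf fun _ => abs_nonneg _

lemma le_cD {r y y' : ℝ} (h : ∀ j : ℤ, r ≤ |y - y' - 2 * Real.pi * j|) : r ≤ circleDist y y' :=
  le_ciInf h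

lemma cD_lt {y y' r : ℝ} (h : circleDist y y' < r) : ∃ j : ℤ, |y - y' - 2 * Real.pi * j| < r :=
  exists_lt_of_ciInf_lt h

lemma cD_lip (y z a : ℝ) : circleDist y a ≤ circleDist z a + |y - z| := by
  have : circleDist y a - |y - z| ≤ circleDist z a := by
    refine le_cD fun j => ?_
    have h1 : circleDist y a ≤ |y - a - 2 * Real.pi * j| := cD_le y a j
    have h2 : |y - a - 2 * Real.pi * j| ≤ |z - a - 2 * Real.pi * j| + |y - z| := by
      have : y - a - 2 * Real.pi * j = (z - a - 2 * Real.pi * j) + (y - z) := by ring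
      rw [this]; exact abs_add_le _ _
    linarith
  linarith

lemma cD_pos {y y' : ℝ} (hy : y ∈ Set.Ico 0 (2 * Real.pi)) (hy' : y' ∈ Set.Ico 0 (2 * Real.pi))
    (hne : y ≠ y') : 0 < circleDist y y' := by
  have hpi := Real.pi_pos
  have habs : |y - y'| < 2 * Real.pi := by
    rw [abs_lt]; constructor <;> [linarith [hy.1, hy'.2]; linarith [hy.2, hy'.1]]
  have h0 : 0 < |y - y'| := abs_pos.mpr (sub_ne_zero.mpr hne)
  refine lt_of_lt_of_le (show 0 < min |y - y'| (2 * Real.pi - |y - y'|) by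
    exact lt_min h0 (by linarith)) (le_cD fun j => ?_)
  rcases eq_or_ne j 0 with rfl | hj
  · simpa using min_le_left _ _
  · refine le_trans (min_le_right _ _) ?_
    have hj1 : (1 : ℝ) ≤ |(j : ℝ)| := by
      have := Int.one_le_abs hj; exact_mod_cast (by exact_mod_cast this : (1:ℤ) ≤ |j|)
    have h2 : 2 * Real.pi ≤ |2 * Real.pi * j| := by
      rw [abs_mul, abs_of_pos (by linarith : (0:ℝ) < 2 * Real.pi)]
      nlinarith
    have htri : |2 * Real.pi * j| ≤ |y - y' - 2 * Real.pi * j| + |y - y'| := by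
      calc |2 * Real.pi * (j:ℝ)| = |(2 * Real.pi * j - (y - y')) + (y - y')| := by ring_nf
      _ ≤ |2 * Real.pi * (j:ℝ) - (y - y')| + |y - y'| := abs_add_le _ _
      _ = |y - y' - 2 * Real.pi * j| + |y - y'| := by rw [abs_sub_comm]
    linarith

lemma exists_pos_forall_le {m : ℕ} (f : Fin m → ℝ) (h : ∀ i, 0 < f i) :
    ∃ ε > 0, ∀ i, ε ≤ f i := by
  induction m with
  | zero => exact ⟨1, one_pos, fun i => i.elim0⟩
  | succ n ih =>
    obtain ⟨ε, hε, hle⟩ := ih (fun i => f i.succ) (fun i => h _)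
    exact ⟨min ε (f 0), lt_min hε (h 0), fun i => by
      rcases Fin.eq_zero_or_eq_succ i with rfl | ⟨j, rfl⟩
      · exact min_le_right _ _
      · exact (min_le_left _ _).trans (hle j)⟩

lemma exists_pos_forall_le₂ {m : ℕ} (f : Fin m → Fin m → ℝ) (h : ∀ i j, i ≠ j → 0 < f i j) :
    ∃ ε > 0, ∀ i j, i ≠ j → ε ≤ f i j := by
  classical
  rcases Finset.eq_empty_or_nonempty (Finset.univ.offDiag (α := Fin m)) with he | hne
  · refine ⟨1, one_pos, fun i j hij => absurd ?_ (by simp [he] : ¬ ((i,j) ∈ Finset.univ.offDiag))⟩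
    simp [Finset.mem_offDiag, hij]
  · obtain ⟨q, hq, hmin⟩ := Finset.exists_min_image _ (fun q => f q.1 q.2) hne
    have hq' := Finset.mem_offDiag.mp hq
    refine ⟨f q.1 q.2, h _ _ hq'.2.2, fun i j hij => ?_⟩
    exact hmin (i, j) (Finset.mem_offDiag.mpr ⟨Finset.mem_univ _, Finset.mem_univ _, hij⟩)

lemma hasDerivAt_shift_pow (x0 z : ℝ) (n : ℕ) :
    HasDerivAt (fun z => (z - x0) ^ n) ((n : ℝ) * (z - x0) ^ (n - 1)) z := by
  simpa using ((hasDerivAt_id z).sub_const x0).fun_pow n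

lemma iteratedDeriv_shift_pow (x0 : ℝ) (K : ℕ) :
    ∀ j, j ≤ K → iteratedDeriv j (fun z => (z - x0) ^ K)
      = fun z => (K.descFactorial j : ℝ) * (z - x0) ^ (K - j) := by
  intro j
  induction j with
  | zero => intro _; simp [iteratedDeriv_zero]
  | succ n ih =>
    intro hK
    rw [iteratedDeriv_succ, ih (Nat.le_of_succ_le hK)]
    funext z
    have hd : HasDerivAt (fun z : ℝ => (K.descFactorial n : ℝ) * (z - x0) ^ (K - n))
        ((K.descFactorial n : ℝ) * (((K - n : ℕ) : ℝ) * (z - x0) ^ (K - n - 1))) z :=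
      (hasDerivAt_shift_pow x0 z (K - n)).const_mul _
    rw [hd.deriv, Nat.descFactorial_succ]
    have h1 : K - (n + 1) = K - n - 1 := by omega
    push_cast [h1, Nat.cast_sub (by omega : n ≤ K)]
    ring

lemma contDiff_deriv_top {f : ℝ → ℝ} (hf : ContDiff ℝ (⊤:ℕ∞) f) : ContDiff ℝ (⊤:ℕ∞) (deriv f) :=
  (contDiff_infty_iff_deriv.mp hf).2

lemma bound_of_iteratedDeriv_zero (K : ℕ) :
    ∀ (f : ℝ → ℝ), ContDiff ℝ (⊤:ℕ∞) f → ∀ (x0 r M : ℝ),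
    (∀ j ≤ K, iteratedDeriv j f x0 = 0) →
    (∀ v ∈ Icc (x0 - r) (x0 + r), |iteratedDeriv (K+1) f v| ≤ M) →
    ∀ z ∈ Icc (x0 - r) (x0 + r), |f z| ≤ M * |z - x0| ^ (K + 1) := by
  induction K with
  | zero =>
    intro f hf x0 r M hj hM z hz
    have hx0 : x0 ∈ Icc (x0 - r) (x0 + r) := by
      constructor <;> linarith [hz.1, hz.2]
    have hder : ∀ v ∈ Icc (x0 - r) (x0 + r), ‖deriv f v‖ ≤ M := by
      intro v hv
      simpa [iteratedDeriv_one] using hM v hv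
    have := Convex.norm_image_sub_le_of_norm_deriv_le
      (fun v _ => ((hf.differentiable (by simp)).differentiableAt))
      hder (convex_Icc _ _) hx0 hz
    have hf0 : f x0 = 0 := by simpa [iteratedDeriv_zero] using hj 0 le_rfl
    calc |f z| = ‖f z - f x0‖ := by rw [hf0]; simp [Real.norm_eq_abs]
    _ ≤ M * ‖z - x0‖ := this
    _ = M * |z - x0| ^ (0 + 1) := by simp [Real.norm_eq_abs]
  | succ n ih =>
    intro f hf x0 r M hj hM z hz
    have hdf : ContDiff ℝ (⊤:ℕ∞) (deriv f) := contDiff_deriv_top hf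
    have ihd : ∀ v ∈ Icc (x0 - r) (x0 + r), |deriv f v| ≤ M * |v - x0| ^ (n + 1) := by
      refine ih (deriv f) hdf x0 r M (fun j hjn => ?_) (fun v hv => ?_)
      · rw [← iteratedDeriv_succ']; exact hj (j + 1) (by omega)
      · rw [← iteratedDeriv_succ']; exact hM v hv
    have hx0 : x0 ∈ Icc (x0 - r) (x0 + r) := by constructor <;> linarith [hz.1, hz.2]
    set s : Set ℝ := Icc (min x0 z) (max x0 z) with hs
    have hsub : s ⊆ Icc (x0 - r) (x0 + r) := by
      intro v hv
      rcases le_total x0 z with h | h <;>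
        simp only [hs, min_def, max_def] at hv <;> split_ifs at hv <;>
        constructor <;> rcases hv with ⟨h1, h2⟩ <;> linarith [hz.1, hz.2]
    have hseg : ∀ v ∈ s, |v - x0| ≤ |z - x0| := by
      intro v hv
      simp only [hs, mem_Icc] at hv
      rcases le_total x0 z with h | h
      · rw [min_eq_left h, max_eq_right h] at hv
        rw [abs_of_nonneg (by linarith), abs_of_nonneg (by linarith)]; linarith
      · rw [min_eq_right h, max_eq_left h] at hv
        rw [abs_of_nonpos (by linarith), abs_of_nonpos (by linarith)]; linarith
    have hM0 : 0 ≤ M := le_trans (abs_nonneg _) (hM x0 hx0)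
    have hder : ∀ v ∈ s, ‖deriv f v‖ ≤ M * |z - x0| ^ (n + 1) := by
      intro v hv
      calc ‖deriv f v‖ = |deriv f v| := rfl
      _ ≤ M * |v - x0| ^ (n + 1) := ihd v (hsub hv)
      _ ≤ M * |z - x0| ^ (n + 1) :=
        mul_le_mul_of_nonneg_left (pow_le_pow_left₀ (abs_nonneg _) (hseg v hv) _) hM0
    have hmem1 : x0 ∈ s := by simp [hs, min_le_left, le_max_left, mem_Icc]
    have hmem2 : z ∈ s := by simp [hs, min_le_right, le_max_right, mem_Icc]
    have := Convex.norm_image_sub_le_of_norm_deriv_le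
      (fun v _ => ((hf.differentiable (by simp)).differentiableAt))
      hder (convex_Icc _ _) hmem1 hmem2
    have hf0 : f x0 = 0 := by simpa [iteratedDeriv_zero] using hj 0 (by omega)
    calc |f z| = ‖f z - f x0‖ := by rw [hf0]; simp [Real.norm_eq_abs]
    _ ≤ M * |z - x0| ^ (n + 1) * ‖z - x0‖ := this
    _ = M * |z - x0| ^ (n + 1 + 1) := by rw [Real.norm_eq_abs]; ring

lemma iteratedDeriv_sub' {f g : ℝ → ℝ} (n : ℕ) (hf : ContDiff ℝ (⊤:ℕ∞) f)
    (hg : ContDiff ℝ (⊤:ℕ∞) g) (x : ℝ) :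
    iteratedDeriv n (fun z => f z - g z) x = iteratedDeriv n f x - iteratedDeriv n g x := by
  have h1 : (fun z => f z - g z) = f - g := rfl
  rw [h1, ← iteratedDerivWithin_univ, ← iteratedDerivWithin_univ, ← iteratedDerivWithin_univ]
  exact iteratedDerivWithin_sub (Set.mem_univ x) uniqueDiffOn_univ
    ((hf.of_le (by exact_mod_cast (le_top : (n:ℕ∞) ≤ ⊤))).contDiffWithinAt)
    ((hg.of_le (by exact_mod_cast (le_top : (n:ℕ∞) ≤ ⊤))).contDiffWithinAt)

lemma contDiff_shift_monomial (p c : ℝ) (K : ℕ) :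
    ContDiff ℝ (⊤:ℕ∞) (fun z : ℝ => c * (z - p) ^ K) :=
  contDiff_const.mul ((contDiff_id.sub contDiff_const).pow K)

lemma iteratedDeriv_shift_monomial (p c : ℝ) (K j : ℕ) (hj : j ≤ K) (x : ℝ) :
    iteratedDeriv j (fun z : ℝ => c * (z - p) ^ K) x
      = c * ((K.descFactorial j : ℝ) * (x - p) ^ (K - j)) := by
  have : iteratedDeriv j (fun z : ℝ => c * (z - p) ^ K) x
      = c * iteratedDeriv j (fun z : ℝ => (z - p) ^ K) x := by
    rw [← iteratedDerivWithin_univ, ← iteratedDerivWithin_univ]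
    exact iteratedDerivWithin_const_mul (Set.mem_univ x) uniqueDiffOn_univ c
      (((contDiff_id.sub contDiff_const).pow K).contDiffWithinAt)
  rw [this, iteratedDeriv_shift_pow p K j hj]

/-- Taylor-type lower bound near a zero of finite even order with positive leading coeff. -/
lemma taylor_lower (f : ℝ → ℝ) (hf : ContDiff ℝ (⊤:ℕ∞) f) (p : ℝ) (K : ℕ) (hK : Even K)
    (hz : ∀ j < K, iteratedDeriv j f p = 0) (ha : 0 < iteratedDeriv K f p) :
    ∃ δ > 0, ∃ η > 0, ∀ z ∈ Icc (p - δ) (p + δ), η * (z - p) ^ K ≤ f z := by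
  set a := iteratedDeriv K f p with ha_def
  set c := a / (K.factorial : ℝ) with hc_def
  have hKfac : (0:ℝ) < K.factorial := by exact_mod_cast K.factorial_pos
  have hc : 0 < c := div_pos ha hKfac
  set F := fun z => f z - c * (z - p) ^ K with hF_def
  have hFsmooth : ContDiff ℝ (⊤:ℕ∞) F := hf.sub (contDiff_shift_monomial p c K)
  have hFzero : ∀ j ≤ K, iteratedDeriv j F p = 0 := by
    intro j hj
    rw [iteratedDeriv_sub' j hf (contDiff_shift_monomial p c K),
      iteratedDeriv_shift_monomial p c K j hj]
    rcases lt_or_eq_of_le hj with h | rfl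
    · rw [hz j h]
      have : (K - j) ≠ 0 := by omega
      simp [this, zero_pow]
    · rw [Nat.descFactorial_self]
      simp only [Nat.sub_self, pow_zero, mul_one, hc_def, ← ha_def]
      field_simp
      ring
  obtain ⟨M, hM⟩ : ∃ M, ∀ v ∈ Icc (p - 1) (p + 1), |iteratedDeriv (K+1) F v| ≤ M := by
    have hcont : ContinuousOn (fun v => |iteratedDeriv (K+1) F v|) (Icc (p-1) (p+1)) :=
      ((hFsmooth.continuous_iteratedDeriv (K+1) (by exact_mod_cast le_top)).abs).continuousOn
    obtain ⟨M, hM⟩ := (isCompact_Icc (a := p - 1) (b := p + 1)).exists_bound_of_continuousOn hcont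
    exact ⟨M, fun v hv => by simpa using hM v hv⟩
  have hM0 : 0 ≤ M := le_trans (abs_nonneg _) (hM p (by constructor <;> linarith))
  set δ := min 1 (c / (2 * (M + 1))) with hδ_def
  have hδpos : 0 < δ := lt_min one_pos (by positivity)
  refine ⟨δ, hδpos, c / 2, by positivity, fun z hz' => ?_⟩
  have hδ1 : δ ≤ 1 := min_le_left _ _
  have hz1 : z ∈ Icc (p - 1) (p + 1) := by
    constructor <;> [linarith [hz'.1]; linarith [hz'.2]]
  have hFbound := bound_of_iteratedDeriv_zero K F hFsmooth p 1 M hFzero hM z hz1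
  have habs : |z - p| ≤ δ := by
    rw [abs_le]; constructor <;> [linarith [hz'.1]; linarith [hz'.2]]
  have hpowK : |z - p| ^ K = (z - p) ^ K := hK.pow_abs _
  have hMδ : M * δ ≤ c / 2 := by
    have h1 : δ ≤ c / (2 * (M + 1)) := min_le_right _ _
    have h2 : M * δ ≤ M * (c / (2 * (M + 1))) := mul_le_mul_of_nonneg_left h1 hM0
    have h3 : M * (c / (2 * (M + 1))) ≤ c / 2 := by
      rw [mul_div_assoc', div_le_div_iff₀ (by positivity) (by norm_num : (0:ℝ) < 2)]
      nlinarith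
    linarith
  have key : |F z| ≤ M * δ * (z - p) ^ K := by
    calc |F z| ≤ M * |z - p| ^ (K + 1) := hFbound
    _ = M * |z - p| * |z - p| ^ K := by ring
    _ ≤ M * δ * |z - p| ^ K := by
      apply mul_le_mul_of_nonneg_right _ (pow_nonneg (abs_nonneg _) _)
      exact mul_le_mul_of_nonneg_left habs hM0
    _ = M * δ * (z - p) ^ K := by rw [hpowK]
  have hFz : F z = f z - c * (z - p) ^ K := rfl
  have hpow_nonneg : 0 ≤ (z - p) ^ K := hpowK ▸ pow_nonneg (abs_nonneg _) _
  have := abs_le.mp key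
  calc (c / 2) * (z - p) ^ K = c * (z - p) ^ K - (c/2) * (z - p) ^ K := by ring
  _ ≤ c * (z - p) ^ K - M * δ * (z - p) ^ K := by nlinarith
  _ ≤ c * (z - p) ^ K + F z := by linarith [this.1]
  _ = f z := by rw [hFz]; ring

lemma even_sum_pow {K : ℕ} (hK : Even K) {h : ℝ} (hh : 0 ≤ h) (u : ℝ) :
    (h/2)^K ≤ u^K + (u+h)^K := by
  have h1 : ∀ v : ℝ, 0 ≤ v^K := fun v => by rw [← hK.pow_abs]; positivity
  rcases le_or_gt (h/2) (|u|) with hc | hc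
  · have : (h/2)^K ≤ |u|^K := pow_le_pow_left₀ (by linarith) hc K
    rw [hK.pow_abs] at this
    linarith [h1 (u+h)]
  · have hc2 : h/2 ≤ |u + h| := by
      rcases abs_cases u with ⟨he, _⟩ | ⟨he, _⟩ <;> rcases abs_cases (u+h) with ⟨he2, _⟩ | ⟨he2, _⟩ <;>
        linarith
    have : (h/2)^K ≤ |u+h|^K := pow_le_pow_left₀ (by linarith) hc2 K
    rw [hK.pow_abs] at this
    linarith [h1 u]

lemma odd_pow_incr_aux {K : ℕ} (hK : Even K) {h : ℝ} (hh : 0 ≤ h) {x : ℝ} (hx : -(h/2) ≤ x) :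
    (h/2)^(K+1) ≤ (x+h)^(K+1) - x^(K+1) := by
  have hodd : Odd (K+1) := Even.add_one hK
  rcases le_or_gt 0 x with hx0 | hx0
  · have h1 : x^(K+1) + h^(K+1) ≤ (x+h)^(K+1) := pow_add_pow_le hx0 hh (by omega)
    have h2 : (h/2)^(K+1) ≤ h^(K+1) := pow_le_pow_left₀ (by linarith) (by linarith) _
    linarith
  · have h1 : x^(K+1) ≤ 0 := hodd.pow_nonpos hx0.le
    have h2 : (h/2)^(K+1) ≤ (x+h)^(K+1) := pow_le_pow_left₀ (by linarith) (by linarith) _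
    linarith

lemma odd_pow_incr {K : ℕ} (hK : Even K) {h : ℝ} (hh : 0 ≤ h) (x : ℝ) :
    (h/2)^(K+1) ≤ (x+h)^(K+1) - x^(K+1) := by
  have hodd : Odd (K+1) := Even.add_one hK
  rcases le_or_gt (-(h/2)) x with hx | hx
  · exact odd_pow_incr_aux hK hh hx
  · have := odd_pow_incr_aux hK hh (x := -h - x) (by linarith)
    have e1 : (-h - x + h : ℝ) = -x := by ring
    rw [e1, hodd.neg_pow, show (-h - x : ℝ) = -(x+h) by ring, hodd.neg_pow] at this
    linarith

/-- Even case diameter estimate. -/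
lemma diam_even {g : ℝ → ℝ} (hg : Continuous g) {p δ η tα : ℝ} {K : ℕ} (hK : Even K)
    (hη : 0 < η) (hδ : 0 ≤ δ)
    (hb : ∀ z ∈ Icc (p - 3*δ) (p + 3*δ), η * (z - p)^K ≤ g z)
    {t : ℝ} (ht : 0 < t) {w : ℝ → ℝ} (hw : ContinuousOn w (Icc 0 t))
    (hwb : ∀ s ∈ Icc 0 t, |w s| ≤ δ)
    {y y' : ℝ} (hy : |y - p| ≤ 3*δ/2) (hy' : |y' - p| ≤ 3*δ/2) (hyy' : y ≤ y')
    (hS : ∫ s in (0:ℝ)..t, g (y + w s) ≤ tα) (hS' : ∫ s in (0:ℝ)..t, g (y' + w s) ≤ tα) :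
    η * t * ((y' - y)/2)^K ≤ 2 * tα := by
  have huIcc : uIcc (0:ℝ) t = Icc 0 t := uIcc_of_le ht.le
  have hcont1 : ContinuousOn (fun s => g (y + w s)) (Icc 0 t) :=
    hg.comp_continuousOn (continuousOn_const.add hw)
  have hcont2 : ContinuousOn (fun s => g (y' + w s)) (Icc 0 t) :=
    hg.comp_continuousOn (continuousOn_const.add hw)
  have hint1 : IntervalIntegrable (fun s => g (y + w s)) MeasureTheory.volume 0 t :=
    (hcont1.mono huIcc.subset).intervalIntegrable
  have hint2 : IntervalIntegrable (fun s => g (y' + w s)) MeasureTheory.volume 0 t :=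
    (hcont2.mono huIcc.subset).intervalIntegrable
  have hptwise : ∀ s ∈ Icc (0:ℝ) t,
      η * ((y' - y)/2)^K ≤ g (y + w s) + g (y' + w s) := by
    intro s hs
    have hws := hwb s hs
    have hmem1 : y + w s ∈ Icc (p - 3*δ) (p + 3*δ) := by
      rw [abs_le] at hy hws; constructor <;> [linarith [hy.1, hws.1]; linarith [hy.2, hws.2]]
    have hmem2 : y' + w s ∈ Icc (p - 3*δ) (p + 3*δ) := by
      rw [abs_le] at hy' hws; constructor <;> [linarith [hy'.1, hws.1]; linarith [hy'.2, hws.2]]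
    have h1 := hb _ hmem1
    have h2 := hb _ hmem2
    have h3 : ((y' - y)/2)^K ≤ (y + w s - p)^K + ((y + w s - p) + (y' - y))^K :=
      even_sum_pow hK (by linarith) (y + w s - p)
    have e : (y + w s - p) + (y' - y) = y' + w s - p := by ring
    rw [e] at h3
    nlinarith
  have hmono : ∫ s in (0:ℝ)..t, (η * ((y' - y)/2)^K)
      ≤ ∫ s in (0:ℝ)..t, (g (y + w s) + g (y' + w s)) := by
    apply intervalIntegral.integral_mono_on ht.le (intervalIntegrable_const) (hint1.add hint2)
    exact hptwise
  rw [intervalIntegral.integral_const, intervalIntegral.integral_add hint1 hint2, smul_eq_mul] at hmono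
  calc η * t * ((y' - y)/2)^K = (t - 0) * (η * ((y' - y)/2)^K) := by ring
  _ ≤ _ := hmono
  _ ≤ 2 * tα := by linarith

/-- Odd case diameter estimate: lower bound on growth via monotone derivative. -/
lemma diam_odd {g : ℝ → ℝ} (hg : ContDiff ℝ (⊤:ℕ∞) g) {p δ η tα : ℝ} {K : ℕ} (hK : Even K)
    (hη : 0 < η) (hδ : 0 ≤ δ)
    (hb : ∀ z ∈ Icc (p - 3*δ) (p + 3*δ), η * (z - p)^K ≤ deriv g z)
    {t : ℝ} (ht : 0 < t) {w : ℝ → ℝ} (hw : ContinuousOn w (Icc 0 t))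
    (hwb : ∀ s ∈ Icc 0 t, |w s| ≤ δ)
    {y y' : ℝ} (hy : |y - p| ≤ 3*δ/2) (hy' : |y' - p| ≤ 3*δ/2) (hyy' : y ≤ y')
    (hS : -tα ≤ ∫ s in (0:ℝ)..t, g (y + w s)) (hS' : ∫ s in (0:ℝ)..t, g (y' + w s) ≤ tα) :
    (η / (K+1)) * t * ((y' - y)/2)^(K+1) ≤ 2 * tα := by
  have hgc : Continuous g := hg.continuous
  have hgd : Continuous (deriv g) := hg.continuous_deriv (by exact_mod_cast le_top)
  have hdiff : Differentiable ℝ g := hg.differentiable (by simp)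
  have huIcc : uIcc (0:ℝ) t = Icc 0 t := uIcc_of_le ht.le
  have hint1 : IntervalIntegrable (fun s => g (y + w s)) MeasureTheory.volume 0 t :=
    ((hgc.comp_continuousOn (continuousOn_const.add hw)).mono huIcc.subset).intervalIntegrable
  have hint2 : IntervalIntegrable (fun s => g (y' + w s)) MeasureTheory.volume 0 t :=
    ((hgc.comp_continuousOn (continuousOn_const.add hw)).mono huIcc.subset).intervalIntegrable
  set h := y' - y with hh_def
  have hh : 0 ≤ h := by linarith
  have hptwise : ∀ s ∈ Icc (0:ℝ) t,
      (η / (K+1)) * (h/2)^(K+1) ≤ g (y' + w s) - g (y + w s) := by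
    intro s hs
    have hws := hwb s hs
    set u := y + w s with hu_def
    have hu' : y' + w s = u + h := by rw [hu_def, hh_def]; ring
    have hmemu : u ∈ Icc (p - 3*δ) (p + 3*δ) := by
      rw [abs_le] at hy hws
      constructor <;> [simp only [hu_def]; simp only [hu_def]] <;>
        [linarith [hy.1, hws.1]; linarith [hy.2, hws.2]]
    have hmemu' : u + h ∈ Icc (p - 3*δ) (p + 3*δ) := by
      rw [abs_le] at hy' hws
      have : u + h = y' + w s := by rw [hu']
      rw [this]
      constructor <;> [linarith [hy'.1, hws.1]; linarith [hy'.2, hws.2]]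
    have hsub : Icc u (u + h) ⊆ Icc (p - 3*δ) (p + 3*δ) := by
      intro v hv; exact ⟨le_trans hmemu.1 hv.1, le_trans hv.2 hmemu'.2⟩
    have hftc : ∫ v in u..(u+h), deriv g v = g (u+h) - g u := by
      apply intervalIntegral.integral_deriv_eq_sub (fun x _ => (hdiff x))
      exact (hgd.continuousOn).intervalIntegrable
    have hlow : ∫ v in u..(u+h), η * (v - p)^K ≤ ∫ v in u..(u+h), deriv g v := by
      apply intervalIntegral.integral_mono_on (by linarith)
      · exact (Continuous.continuousOn (by continuity)).intervalIntegrable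
      · exact (hgd.continuousOn).intervalIntegrable
      · intro v hv
        exact hb v (hsub hv)
    have hcomp : ∫ v in u..(u+h), η * (v - p)^K
        = η * (((u + h - p)^(K+1) - (u - p)^(K+1)) / (K+1)) := by
      rw [intervalIntegral.integral_const_mul]
      have : ∫ v in u..(u+h), (v - p)^K
          = ∫ v in (u-p)..(u+h-p), v^K := by
        simpa using intervalIntegral.integral_comp_sub_right (a := u) (b := u + h)
          (fun v => v^K) p
      rw [this, integral_pow]
    have hkey : (η / (K+1)) * (h/2)^(K+1) ≤ g (u+h) - g u := by
      rw [← hftc]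
      refine le_trans ?_ hlow
      rw [hcomp]
      have hincr := odd_pow_incr hK hh (u - p)
      have e : (u - p + h) = u + h - p := by ring
      rw [e] at hincr
      have h3 : (η * (h/2)^(K+1)) / ((K:ℝ)+1)
          ≤ (η * ((u + h - p)^(K+1) - (u - p)^(K+1))) / ((K:ℝ)+1) := by
        gcongr
      calc (η / ((K:ℝ)+1)) * (h/2)^(K+1) = (η * (h/2)^(K+1)) / ((K:ℝ)+1) := by ring
      _ ≤ (η * ((u + h - p)^(K+1) - (u - p)^(K+1))) / ((K:ℝ)+1) := h3
      _ = η * (((u + h - p)^(K+1) - (u - p)^(K+1)) / ((K:ℝ)+1)) := by ring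
    calc (η / (K+1)) * (h/2)^(K+1) ≤ g (u+h) - g u := hkey
    _ = g (y' + w s) - g (y + w s) := by rw [hu']
  have hmono : ∫ s in (0:ℝ)..t, ((η / (K+1)) * (h/2)^(K+1))
      ≤ ∫ s in (0:ℝ)..t, (g (y' + w s) - g (y + w s)) := by
    apply intervalIntegral.integral_mono_on ht.le intervalIntegrable_const (hint2.sub hint1)
    exact hptwise
  rw [intervalIntegral.integral_const, intervalIntegral.integral_sub hint2 hint1, smul_eq_mul] at hmono
  calc (η / (K+1)) * t * (h/2)^(K+1) = (t - 0) * ((η / (K+1)) * (h/2)^(K+1)) := by ring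
  _ ≤ _ := hmono
  _ ≤ 2 * tα := by linarith

lemma conv_bound {η c t h : ℝ} {k N : ℕ} (hη : 0 < η) (hc : 0 < c) (ht : 1 ≤ t) (hh : 0 ≤ h)
    (hk1 : 1 ≤ k) (hkN : k ≤ N)
    (hineq : η / ((N:ℝ)+1) * t * (h/2)^k ≤ 2*c*t^((1:ℝ)/((N:ℝ)+1))) :
    h ≤ 2 * max 1 (2*c*((N:ℝ)+1)/η) * t^(-(1:ℝ)/((N:ℝ)+1)) := by
  have ht0 : (0:ℝ) < t := lt_of_lt_of_le one_pos ht
  have hN1 : (0:ℝ) < (N:ℝ)+1 := by positivity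
  set τ := t^(-(1:ℝ)/((N:ℝ)+1)) with hτ_def
  have hτ0 : 0 < τ := Real.rpow_pos_of_pos ht0 _
  set A := 2*c*((N:ℝ)+1)/η with hA_def
  have hA0 : 0 < A := by positivity
  have step1 : (h/2)^k ≤ A * t^((1:ℝ)/((N:ℝ)+1) - 1) := by
    rw [Real.rpow_sub ht0, Real.rpow_one]
    rw [hA_def, div_mul_div_comm, le_div_iff₀ (by positivity)]
    have e : (h/2)^k * (η * t) = (η / ((N:ℝ)+1) * t * (h/2)^k) * ((N:ℝ)+1) := by
      field_simp
    rw [e]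
    calc (η / ((N:ℝ)+1) * t * (h/2)^k) * ((N:ℝ)+1)
        ≤ (2*c*t^((1:ℝ)/((N:ℝ)+1))) * ((N:ℝ)+1) := by
          apply mul_le_mul_of_nonneg_right hineq hN1.le
    _ = 2*c*((N:ℝ)+1) * t^((1:ℝ)/((N:ℝ)+1)) := by ring
  have hτk : τ^k = t^((-(1:ℝ)/((N:ℝ)+1)) * k) := by
    rw [Real.rpow_mul ht0.le, Real.rpow_natCast]
  have hexp : (1:ℝ)/((N:ℝ)+1) - 1 ≤ (-(1:ℝ)/((N:ℝ)+1)) * k := by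
    rw [div_sub' hN1.ne', neg_div, neg_mul, div_mul_eq_mul_div, ← neg_div,
      div_le_div_iff_of_pos_right hN1]
    have : (k:ℝ) ≤ (N:ℝ) := by exact_mod_cast hkN
    linarith
  have step2 : t^((1:ℝ)/((N:ℝ)+1) - 1) ≤ τ^k := by
    rw [hτk]; exact Real.rpow_le_rpow_of_exponent_le ht hexp
  have step3 : (h/2)^k ≤ A * τ^k := le_trans step1 (by nlinarith [pow_pos hτ0 k])
  have hr : ((h/2)/τ)^k ≤ A := by
    rw [div_pow, div_le_iff₀ (pow_pos hτ0 k)]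
    linarith
  have hrmax : (h/2)/τ ≤ max 1 A := by
    rcases le_or_gt ((h/2)/τ) 1 with h1 | h1
    · exact le_trans h1 (le_max_left _ _)
    · refine le_trans ?_ (le_max_right _ _)
      calc (h/2)/τ ≤ ((h/2)/τ)^k := le_self_pow₀ h1.le (by omega)
      _ ≤ A := hr
  calc h = 2 * ((h/2)/τ) * τ := by field_simp
  _ ≤ 2 * max 1 A * τ := by nlinarith [hτ0, le_max_left (1:ℝ) A]

lemma far_bound {g : ℝ → ℝ} (hg : Continuous g) {y δ η₀ t : ℝ} (hδ : 0 < δ) (ht : 0 < t)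
    (hη₀ : 0 < η₀) (hne : ∀ z ∈ Icc (y-δ) (y+δ), η₀ ≤ |g z|)
    {w : ℝ → ℝ} (hw : ContinuousOn w (Icc 0 t)) (hwb : ∀ s ∈ Icc 0 t, |w s| ≤ δ) :
    η₀ * t ≤ |∫ s in (0:ℝ)..t, g (y + w s)| := by
  have huIcc : uIcc (0:ℝ) t = Icc 0 t := uIcc_of_le ht.le
  have hint : IntervalIntegrable (fun s => g (y + w s)) MeasureTheory.volume 0 t :=
    ((hg.comp_continuousOn (continuousOn_const.add hw)).mono huIcc.subset).intervalIntegrable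
  have hymem : y ∈ Icc (y-δ) (y+δ) := by constructor <;> linarith
  have hmemz : ∀ s ∈ Icc (0:ℝ) t, y + w s ∈ Icc (y-δ) (y+δ) := by
    intro s hs
    have := abs_le.mp (hwb s hs)
    constructor <;> [linarith [this.1]; linarith [this.2]]
  have hsign : (∀ z ∈ Icc (y-δ) (y+δ), η₀ ≤ g z) ∨ (∀ z ∈ Icc (y-δ) (y+δ), g z ≤ -η₀) := by
    rcases le_or_gt η₀ (g y) with hy | hy
    · left
      intro z hz
      by_contra hcon
      push_neg at hcon
      have hzneg : g z ≤ -η₀ := by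
        rcases (le_abs'.mp (hne z hz)) with h | h
        · linarith
        · linarith
      rcases le_total z y with hzy | hzy
      · have hsub : Icc z y ⊆ Icc (y-δ) (y+δ) :=
          fun v hv => ⟨le_trans hz.1 hv.1, le_trans hv.2 hymem.2⟩
        have := intermediate_value_Icc hzy (hg.continuousOn.mono hsub)
        have h0 : (0:ℝ) ∈ Icc (g z) (g y) := ⟨by linarith, by linarith⟩
        obtain ⟨x0, hx0, hgx0⟩ := this h0
        have := hne x0 (hsub hx0)
        rw [hgx0] at this
        simp at this; linarith
      · have hsub : Icc y z ⊆ Icc (y-δ) (y+δ) :=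
          fun v hv => ⟨le_trans hymem.1 hv.1, le_trans hv.2 hz.2⟩
        have := intermediate_value_Icc' hzy (hg.continuousOn.mono hsub)
        have h0 : (0:ℝ) ∈ Icc (g z) (g y) := ⟨by linarith, by linarith⟩
        obtain ⟨x0, hx0, hgx0⟩ := this h0
        have := hne x0 (hsub hx0)
        rw [hgx0] at this
        simp at this; linarith
    · right
      have hyneg : g y ≤ -η₀ := by
        rcases (le_abs'.mp (hne y hymem)) with h | h
        · linarith
        · linarith
      intro z hz
      by_contra hcon
      push_neg at hcon
      have hzpos : η₀ ≤ g z := by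
        rcases (le_abs'.mp (hne z hz)) with h | h
        · linarith
        · linarith
      rcases le_total z y with hzy | hzy
      · have hsub : Icc z y ⊆ Icc (y-δ) (y+δ) :=
          fun v hv => ⟨le_trans hz.1 hv.1, le_trans hv.2 hymem.2⟩
        have := intermediate_value_Icc' hzy (hg.continuousOn.mono hsub)
        have h0 : (0:ℝ) ∈ Icc (g y) (g z) := ⟨by linarith, by linarith⟩
        obtain ⟨x0, hx0, hgx0⟩ := this h0
        have := hne x0 (hsub hx0)
        rw [hgx0] at this
        simp at this; linarith
      · have hsub : Icc y z ⊆ Icc (y-δ) (y+δ) :=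
          fun v hv => ⟨le_trans hymem.1 hv.1, le_trans hv.2 hz.2⟩
        have := intermediate_value_Icc hzy (hg.continuousOn.mono hsub)
        have h0 : (0:ℝ) ∈ Icc (g y) (g z) := ⟨by linarith, by linarith⟩
        obtain ⟨x0, hx0, hgx0⟩ := this h0
        have := hne x0 (hsub hx0)
        rw [hgx0] at this
        simp at this; linarith
  rcases hsign with hpos | hneg
  · have hmono : ∫ s in (0:ℝ)..t, η₀ ≤ ∫ s in (0:ℝ)..t, g (y + w s) := by
      apply intervalIntegral.integral_mono_on ht.le intervalIntegrable_const hint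
      exact fun s hs => hpos _ (hmemz s hs)
    rw [intervalIntegral.integral_const, smul_eq_mul] at hmono
    have : η₀ * t ≤ ∫ s in (0:ℝ)..t, g (y + w s) := by linarith [hmono]
    exact le_trans this (le_abs_self _)
  · have hmono : ∫ s in (0:ℝ)..t, g (y + w s) ≤ ∫ s in (0:ℝ)..t, (-η₀) := by
      apply intervalIntegral.integral_mono_on ht.le hint intervalIntegrable_const
      exact fun s hs => hneg _ (hmemz s hs)
    rw [intervalIntegral.integral_const, smul_eq_mul] at hmono
    have : η₀ * t ≤ -∫ s in (0:ℝ)..t, g (y + w s) := by linarith [hmono]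
    exact le_trans this (neg_le_abs _)

lemma key_even {g : ℝ → ℝ} (hgc : Continuous g) {p δi ηi : ℝ} {ki N : ℕ}
    (hev : Even ki) (hηi : 0 < ηi)
    (hbnd : ∀ z ∈ Icc (p - δi) (p + δi), ηi * (z - p)^ki ≤ g z) :
    ∀ (δ' : ℝ), 0 < δ' → 3*δ' ≤ δi → ∀ (t : ℝ), 0 < t →
    ∀ (w : ℝ → ℝ), ContinuousOn w (Icc 0 t) → (∀ s ∈ Icc (0:ℝ) t, |w s| ≤ δ') →
    ∀ (tb y y' : ℝ), |y - p| ≤ 3*δ'/2 → |y' - p| ≤ 3*δ'/2 → y ≤ y' →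
    (∫ s in (0:ℝ)..t, g (y + w s)) ≤ tb → (∫ s in (0:ℝ)..t, g (y' + w s)) ≤ tb →
    (ηi/((N:ℝ)+1)) * t * ((y' - y)/2)^ki ≤ 2*tb := by
  intro δ' hδ' h3δ t ht w hw hwb tb y y' hy hy' hyy' hS hS'
  have hsub : Icc (p - 3*δ') (p + 3*δ') ⊆ Icc (p - δi) (p + δi) :=
    Icc_subset_Icc (by linarith) (by linarith)
  have hd := diam_even hgc hev hηi hδ'.le (fun z hz => hbnd z (hsub hz)) ht hw hwb hy hy' hyy' hS hS'
  have hpow : 0 ≤ ((y' - y)/2)^ki := pow_nonneg (by linarith) _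
  have hcoef : ηi/((N:ℝ)+1) ≤ ηi := by
    apply div_le_self hηi.le
    have : (0:ℝ) ≤ (N:ℝ) := Nat.cast_nonneg N
    linarith
  nlinarith [hd, mul_nonneg (mul_nonneg (sub_nonneg.mpr hcoef) ht.le) hpow]

lemma key_odd {g : ℝ → ℝ} (hg : ContDiff ℝ (⊤:ℕ∞) g) {p δi ηi : ℝ} {K N : ℕ}
    (hK : Even K) (hkN : K + 1 ≤ N) (hηi : 0 < ηi)
    (hbnd : ∀ z ∈ Icc (p - δi) (p + δi), ηi * (z - p)^K ≤ deriv g z) :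
    ∀ (δ' : ℝ), 0 < δ' → 3*δ' ≤ δi → ∀ (t : ℝ), 0 < t →
    ∀ (w : ℝ → ℝ), ContinuousOn w (Icc 0 t) → (∀ s ∈ Icc (0:ℝ) t, |w s| ≤ δ') →
    ∀ (tb y y' : ℝ), |y - p| ≤ 3*δ'/2 → |y' - p| ≤ 3*δ'/2 → y ≤ y' →
    (-tb ≤ ∫ s in (0:ℝ)..t, g (y + w s)) → (∫ s in (0:ℝ)..t, g (y' + w s)) ≤ tb →
    (ηi/((N:ℝ)+1)) * t * ((y' - y)/2)^(K+1) ≤ 2*tb := by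
  intro δ' hδ' h3δ t ht w hw hwb tb y y' hy hy' hyy' hS hS'
  have hsub : Icc (p - 3*δ') (p + 3*δ') ⊆ Icc (p - δi) (p + δi) :=
    Icc_subset_Icc (by linarith) (by linarith)
  have hd := diam_odd hg hK hηi hδ'.le (fun z hz => hbnd z (hsub hz)) ht hw hwb hy hy' hyy' hS hS'
  have hpow : 0 ≤ ((y' - y)/2)^(K+1) := pow_nonneg (by linarith) _
  have hcast : (K:ℝ) + 1 ≤ (N:ℝ) := by exact_mod_cast hkN
  have hcoef : ηi/((N:ℝ)+1) ≤ ηi/((K:ℝ)+1) := by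
    rw [div_le_div_iff₀ (by positivity) (by positivity)]
    nlinarith
  nlinarith [hd, mul_nonneg (mul_nonneg (sub_nonneg.mpr hcoef) ht.le) hpow]

end Helpers

set_option maxHeartbeats 1000000 in
/-- **Covering lemma for the random phase derivative (Lemma 2.2).** -/
theorem covering_lemma
    (b : ℝ → ℝ) (m N : ℕ) (ys : Fin m → ℝ)
    (hb : ContDiff ℝ (⊤ : ℕ∞) b) (hbper : Function.Periodic b (2 * Real.pi))
    (hN : 1 ≤ N)
    (hysmem : ∀ i, ys i ∈ Set.Ico (0 : ℝ) (2 * Real.pi))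
    (hysinj : Function.Injective ys)
    (hcrit : ∀ y ∈ Set.Ico (0 : ℝ) (2 * Real.pi), (deriv b y = 0 ↔ ∃ i, ys i = y))
    (horder : ∀ i, ∃ k ≤ N, iteratedDeriv (k + 1) b (ys i) ≠ 0) :
    ∃ δ > 0, ∃ c > 0, ∃ C > 0, ∀ t : ℝ, 1 ≤ t →
      ∀ w : ℝ → ℝ, ContinuousOn w (Set.Icc (0:ℝ) t) →
      (∀ s ∈ Set.Icc (0:ℝ) t, |w s| ≤ δ) →
      ∃ a l : Fin m → ℝ,
        (∀ i, 0 ≤ l i) ∧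
        (Pairwise fun i j => Disjoint (circleArc (a i) (l i)) (circleArc (a j) (l j))) ∧
        (∀ i, circleArc (a i) (l i) ⊆ {y : ℝ | circleDist y (ys i) < 2 * δ}) ∧
        ({y ∈ Set.Ico (0:ℝ) (2 * Real.pi) |
            |∫ s in (0:ℝ)..t, deriv b (y + w s)| ≤ c * t ^ ((1 : ℝ) / ((N : ℝ) + 1))}
          ⊆ ⋃ i, circleArc (a i) (l i)) ∧
        (∑ i, l i ≤ C * t ^ (-(1 : ℝ) / ((N : ℝ) + 1))) := by
  classical
  have hπ : 0 < Real.pi := Real.pi_pos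
  have h2π : (0:ℝ) < 2 * Real.pi := by linarith
  set g := deriv b with hg_def
  have hgsmooth : ContDiff ℝ (⊤:ℕ∞) g := contDiff_deriv_top hb
  have hgc : Continuous g := hgsmooth.continuous
  have hgper : Function.Periodic g (2*Real.pi) := by
    intro x
    have h1 : (fun y => b (y + 2*Real.pi)) = b := funext fun y => hbper y
    calc g (x + 2*Real.pi) = deriv (fun y => b (y + 2*Real.pi)) x :=
      (deriv_comp_add_const b (2*Real.pi) x).symm
    _ = g x := by rw [h1]
  have hgshift : ∀ (z : ℝ) (n : ℤ), g (z - 2*Real.pi*n) = g z := by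
    intro z n
    have := hgper.sub_int_mul_eq (x := z) (n := n)
    rwa [show ((n:ℝ))*(2*Real.pi) = 2*Real.pi*(n:ℝ) by ring] at this
  have hgzero : ∀ i, g (ys i) = 0 := fun i => (hcrit _ (hysmem i)).mpr ⟨i, rfl⟩
  have hreduce : ∀ z : ℝ, ∃ n : ℤ, z - 2*Real.pi*n ∈ Set.Ico 0 (2*Real.pi) := by
    intro z
    refine ⟨⌊z/(2*Real.pi)⌋, ?_, ?_⟩
    · have h1 := Int.floor_le (z/(2*Real.pi))
      rw [le_div_iff₀ h2π] at h1
      linarith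
    · have h2 := Int.lt_floor_add_one (z/(2*Real.pi))
      rw [div_lt_iff₀ h2π] at h2
      linarith
  -- per-critical-point quantitative estimates
  have key : ∀ i : Fin m, ∃ ki : ℕ, 1 ≤ ki ∧ ki ≤ N ∧ ∃ δi, 0 < δi ∧ ∃ ηi, 0 < ηi ∧
      ∀ (δ' : ℝ), 0 < δ' → 3*δ' ≤ δi →
      ∀ (t : ℝ), 0 < t → ∀ (w : ℝ → ℝ), ContinuousOn w (Set.Icc 0 t) →
        (∀ s ∈ Set.Icc (0:ℝ) t, |w s| ≤ δ') →
      ∀ (tb y y' : ℝ), |y - ys i| ≤ 3*δ'/2 → |y' - ys i| ≤ 3*δ'/2 → y ≤ y' →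
      |∫ s in (0:ℝ)..t, g (y + w s)| ≤ tb → |∫ s in (0:ℝ)..t, g (y' + w s)| ≤ tb →
      (ηi/((N:ℝ)+1)) * t * ((y' - y)/2)^ki ≤ 2*tb := by
    intro i
    have hex : ∃ k, iteratedDeriv (k+1) b (ys i) ≠ 0 := by
      obtain ⟨k, _, hk⟩ := horder i; exact ⟨k, hk⟩
    have hki_spec : iteratedDeriv (Nat.find hex + 1) b (ys i) ≠ 0 := Nat.find_spec hex
    set ki := Nat.find hex with hki_def
    have hki_min : ∀ j, j < ki → iteratedDeriv (j+1) b (ys i) = 0 := by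
      intro j hj; have := Nat.find_min hex hj; simpa using this
    have hkiN : ki ≤ N := by
      obtain ⟨k, hkN, hk⟩ := horder i
      exact le_trans (Nat.find_min' hex hk) hkN
    have hrel : ∀ (j : ℕ) (x : ℝ), iteratedDeriv j g x = iteratedDeriv (j+1) b x := by
      intro j x; rw [iteratedDeriv_succ']
    have hki1 : 1 ≤ ki := by
      rcases Nat.eq_zero_or_pos ki with h0 | h1
    -- ki = 0 contradicts deriv b (ys i) = 0
      · exfalso
        apply hki_spec
        rw [show ki = 0 from h0] at hki_min ⊢
        simpa [iteratedDeriv_one] using hgzero i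
      · exact h1
    have ha_ne : iteratedDeriv ki g (ys i) ≠ 0 := by rw [hrel]; exact hki_spec
    refine ⟨ki, hki1, hkiN, ?_⟩
    rcases Nat.even_or_odd ki with hev | hodd
    · -- even order
      rcases ha_ne.lt_or_gt with hneg | hpos
      · obtain ⟨δi, hδi, ηi, hηi, hbnd⟩ := taylor_lower (fun z => -(g z)) hgsmooth.neg
          (ys i) ki hev
          (fun j hj => by rw [iteratedDeriv_fun_neg, hrel, hki_min j hj, neg_zero])
          (by rw [iteratedDeriv_fun_neg]; exact neg_pos.mpr hneg)
        refine ⟨δi, hδi, ηi, hηi, ?_⟩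
        intro δ' hδ' h3δ t ht w hw hwb tb y y' hy hy' hyy' hS hS'
        have := key_even (N := N) (g := fun z => -(g z)) hgc.neg hev hηi hbnd δ' hδ' h3δ t ht w hw hwb
          tb y y' hy hy' hyy'
          (by rw [intervalIntegral.integral_neg]; linarith [(abs_le.mp hS).1])
          (by rw [intervalIntegral.integral_neg]; linarith [(abs_le.mp hS').1])
        exact this
      · obtain ⟨δi, hδi, ηi, hηi, hbnd⟩ := taylor_lower g hgsmooth (ys i) ki hev
          (fun j hj => by rw [hrel]; exact hki_min j hj) hpos
        refine ⟨δi, hδi, ηi, hηi, ?_⟩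
        intro δ' hδ' h3δ t ht w hw hwb tb y y' hy hy' hyy' hS hS'
        exact key_even (N := N) hgc hev hηi hbnd δ' hδ' h3δ t ht w hw hwb tb y y' hy hy' hyy'
          (abs_le.mp hS).2 (abs_le.mp hS').2
    · -- odd order
      obtain ⟨K, hKdef⟩ : ∃ K, ki = K + 1 := ⟨ki - 1, by omega⟩
      have hKev : Even K := by
        rcases hodd with ⟨r, hr⟩; exact ⟨r, by omega⟩
      have hKN : K + 1 ≤ N := hKdef ▸ hkiN
      have hzeroK : ∀ j, j < K → iteratedDeriv j (deriv g) (ys i) = 0 := by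
        intro j hj
        rw [← iteratedDeriv_succ', hrel]
        exact hki_min (j+1) (by omega)
      have hlead : iteratedDeriv K (deriv g) (ys i) = iteratedDeriv ki g (ys i) := by
        rw [← iteratedDeriv_succ', hKdef]
      rcases ha_ne.lt_or_gt with hneg | hpos
      · -- work with -g ; deriv (-g) = - deriv g
        have hderiv_neg : (fun z => -(deriv g z)) = deriv (fun z => -(g z)) := by
          funext z; rw [deriv.fun_neg]
        obtain ⟨δi, hδi, ηi, hηi, hbnd⟩ := taylor_lower (fun z => -(deriv g z))
          (contDiff_deriv_top hgsmooth).neg (ys i) K hKev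
          (fun j hj => by rw [iteratedDeriv_fun_neg, hzeroK j hj, neg_zero])
          (by rw [iteratedDeriv_fun_neg, hlead]; exact neg_pos.mpr hneg)
        refine ⟨δi, hδi, ηi, hηi, ?_⟩
        intro δ' hδ' h3δ t ht w hw hwb tb y y' hy hy' hyy' hS hS'
        have hbnd' : ∀ z ∈ Set.Icc (ys i - δi) (ys i + δi),
            ηi * (z - ys i)^K ≤ deriv (fun z => -(g z)) z := by
          intro z hz
          rw [← hderiv_neg]
          exact hbnd z hz
        have := key_odd (N := N) (g := fun z => -(g z)) hgsmooth.neg hKev hKN hηi hbnd'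
          δ' hδ' h3δ t ht w hw hwb tb y y' hy hy' hyy'
          (by rw [intervalIntegral.integral_neg]; linarith [(abs_le.mp hS).2])
          (by rw [intervalIntegral.integral_neg]; linarith [(abs_le.mp hS').1])
        rw [hKdef]
        exact this
      · obtain ⟨δi, hδi, ηi, hηi, hbnd⟩ := taylor_lower (fun z => deriv g z)
          (contDiff_deriv_top hgsmooth) (ys i) K hKev
          (fun j hj => hzeroK j hj)
          (by rw [show iteratedDeriv K (fun z => deriv g z) (ys i)
                = iteratedDeriv K (deriv g) (ys i) from rfl, hlead]; exact hpos)
        refine ⟨δi, hδi, ηi, hηi, ?_⟩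
        intro δ' hδ' h3δ t ht w hw hwb tb y y' hy hy' hyy' hS hS'
        have := key_odd (N := N) (g := g) hgsmooth hKev hKN hηi hbnd
          δ' hδ' h3δ t ht w hw hwb tb y y' hy hy' hyy'
          (by linarith [(abs_le.mp hS).1]) (abs_le.mp hS').2
        rw [hKdef]
        exact this
  choose kf hk1 hkN δf hδf ηf hηf hkey using key
  obtain ⟨δA, hδApos, hδAle⟩ := exists_pos_forall_le δf hδf
  obtain ⟨ηA, hηApos, hηAle⟩ := exists_pos_forall_le ηf hηf
  obtain ⟨δB, hδBpos, hgap⟩ : ∃ ε > 0, ∀ i j : Fin m, i ≠ j → 5*ε ≤ circleDist (ys i) (ys j) := by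
    obtain ⟨ε, hε, hle⟩ := exists_pos_forall_le₂ (fun i j => circleDist (ys i) (ys j)/5)
      (fun i j hij => by
        have : ys i ≠ ys j := fun h => hij (hysinj h)
        have := cD_pos (hysmem i) (hysmem j) this
        positivity)
    refine ⟨ε, hε, fun i j hij => ?_⟩
    have := hle i j hij
    linarith
  set δ : ℝ := min (δA/3) (min δB (Real.pi/2)) with hδ_def
  have hδpos : 0 < δ := lt_min (by positivity) (lt_min hδBpos (by positivity))
  have hδA3 : 3*δ ≤ δA := by
    have := min_le_left (δA/3) (min δB (Real.pi/2)); linarith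
  have hδδB : δ ≤ δB := le_trans (min_le_right _ _) (min_le_left _ _)
  have hδπ : δ ≤ Real.pi/2 := le_trans (min_le_right _ _) (min_le_right _ _)
  -- far-field lower bound constant
  set Sfar : Set ℝ := Set.Icc (-(2*Real.pi)) (4*Real.pi) ∩
      ⋂ i : Fin m, ⋂ j : ℤ, {z : ℝ | δ/2 ≤ |z - ys i - 2*Real.pi*j|} with hSfar_def
  have hSfar_mem : ∀ z : ℝ, z ∈ Sfar ↔
      (z ∈ Set.Icc (-(2*Real.pi)) (4*Real.pi) ∧ ∀ (i : Fin m) (j : ℤ), δ/2 ≤ |z - ys i - 2*Real.pi*(j:ℝ)|) := by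
    intro z
    simp only [hSfar_def, Set.mem_inter_iff, Set.mem_iInter, Set.mem_setOf_eq]
  have hSfar_comp : IsCompact Sfar := by
    apply IsCompact.inter_right isCompact_Icc
    refine isClosed_iInter fun i => isClosed_iInter fun j => ?_
    exact isClosed_le continuous_const
      (((continuous_id.sub continuous_const).sub continuous_const).abs)
  have hgneS : ∀ z ∈ Sfar, g z ≠ 0 := by
    intro z hz hg0
    obtain ⟨n, hn⟩ := hreduce z
    have hz' : g (z - 2*Real.pi*n) = 0 := by rw [hgshift]; exact hg0
    obtain ⟨i, hi⟩ := (hcrit _ hn).mp hz'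
    have hmem := ((hSfar_mem z).mp hz).2 i n
    rw [hi] at hmem
    simp at hmem
    linarith
  obtain ⟨η₀, hη₀pos, hη₀⟩ : ∃ η₀ > 0, ∀ z ∈ Sfar, η₀ ≤ |g z| := by
    rcases Set.eq_empty_or_nonempty Sfar with he | hne
    · exact ⟨1, one_pos, fun z hz => absurd (he ▸ hz) (Set.notMem_empty z)⟩
    · obtain ⟨z0, hz0, hmin⟩ := hSfar_comp.exists_isMinOn hne (hgc.abs.continuousOn)
      exact ⟨|g z0|, abs_pos.mpr (hgneS z0 hz0), fun z hz => hmin hz⟩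
  set c : ℝ := η₀/2 with hc_def
  have hcpos : 0 < c := by positivity
  set K₀ : ℝ := 2 * max 1 (2*c*((N:ℝ)+1)/ηA) with hK₀_def
  have hK₀pos : 0 < K₀ := by positivity
  set C : ℝ := 12*((m:ℝ)+1)*K₀ with hC_def
  have hCpos : 0 < C := by positivity
  refine ⟨δ, hδpos, c, hcpos, C, hCpos, ?_⟩
  intro t ht w hw hwb
  have ht0 : (0:ℝ) < t := lt_of_lt_of_le one_pos ht
  set τ : ℝ := t ^ (-(1:ℝ)/((N:ℝ)+1)) with hτ_def
  have hτ0 : 0 < τ := Real.rpow_pos_of_pos ht0 _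
  set tα : ℝ := c * t ^ ((1:ℝ)/((N:ℝ)+1)) with htα_def
  -- every sublevel point is near some critical point
  have hnear : ∀ y : ℝ, y ∈ Set.Ico (0:ℝ) (2*Real.pi) →
      |∫ s in (0:ℝ)..t, g (y + w s)| ≤ tα → ∃ i, circleDist y (ys i) < 3*δ/2 := by
    intro y hyIco hyS
    by_contra hcon
    push_neg at hcon
    have hne : ∀ z ∈ Set.Icc (y-δ) (y+δ), η₀ ≤ |g z| := by
      intro z hz
      apply hη₀
      rw [hSfar_mem]
      constructor
      · constructor
        · have := hz.1; have := hyIco.1; simp only [Set.mem_Icc] at hz ⊢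
          nlinarith [hπ]
        · have := hz.2; have := hyIco.2
          nlinarith [hπ]
      · intro i j
        have h1 := hcon i
        have h2 := cD_lip y z (ys i)
        have h3 : circleDist z (ys i) ≥ δ/2 := by
          have : |y - z| ≤ δ := by
            rw [abs_le]; constructor <;> [linarith [hz.2]; linarith [hz.1]]
          linarith
        exact le_trans h3 (cD_le z (ys i) j)
    have hfar := far_bound hgc hδpos ht0 hη₀pos hne hw hwb
    have htαt : t ^ ((1:ℝ)/((N:ℝ)+1)) ≤ t := by
      have h1 : (1:ℝ)/((N:ℝ)+1) ≤ 1 := by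
        rw [div_le_one (by positivity)]
        have : (0:ℝ) ≤ (N:ℝ) := Nat.cast_nonneg N
        linarith
      calc t ^ ((1:ℝ)/((N:ℝ)+1)) ≤ t ^ (1:ℝ) := Real.rpow_le_rpow_of_exponent_le ht h1
      _ = t := Real.rpow_one t
    have : η₀ * t ≤ tα := le_trans hfar hyS
    rw [htα_def, hc_def] at this
    nlinarith [Real.rpow_pos_of_pos ht0 ((1:ℝ)/((N:ℝ)+1))]
  -- diameter bound for sublevel points near a given critical point
  have hdiam : ∀ i : Fin m, ∀ z z' : ℝ, |z - ys i| ≤ 3*δ/2 → |z' - ys i| ≤ 3*δ/2 →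
      |∫ s in (0:ℝ)..t, g (z + w s)| ≤ tα → |∫ s in (0:ℝ)..t, g (z' + w s)| ≤ tα →
      |z - z'| ≤ K₀ * τ := by
    have main : ∀ i : Fin m, ∀ z z' : ℝ, z ≤ z' → |z - ys i| ≤ 3*δ/2 → |z' - ys i| ≤ 3*δ/2 →
        |∫ s in (0:ℝ)..t, g (z + w s)| ≤ tα → |∫ s in (0:ℝ)..t, g (z' + w s)| ≤ tα →
        z' - z ≤ K₀ * τ := by
      intro i z z' hzz' hz hz' hSz hSz'
      have hk := hkey i δ hδpos (le_trans hδA3 (hδAle i)) t ht0 w hw hwb tα z z' hz hz' hzz'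
        hSz hSz'
      have hpow : 0 ≤ ((z' - z)/2)^(kf i) := pow_nonneg (by linarith) _
      have hcoef : ηA/((N:ℝ)+1) ≤ ηf i/((N:ℝ)+1) := by
        gcongr
        exact hηAle i
      have huni : ηA/((N:ℝ)+1) * t * ((z' - z)/2)^(kf i) ≤ 2*c*t^((1:ℝ)/((N:ℝ)+1)) := by
        rw [htα_def] at hk
        nlinarith [hk, mul_nonneg (mul_nonneg (sub_nonneg.mpr hcoef) ht0.le) hpow]
      have := conv_bound hηApos hcpos ht (by linarith : (0:ℝ) ≤ z' - z) (hk1 i) (hkN i) huni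
      rw [← hK₀_def, ← hτ_def] at this
      exact this
    intro i z z' hz hz' hSz hSz'
    rcases le_total z z' with h | h
    · rw [abs_sub_comm, abs_of_nonneg (by linarith)]
      exact main i z z' h hz hz' hSz hSz'
    · rw [abs_of_nonneg (by linarith)]
      exact main i z' z h hz' hz hSz' hSz
  -- integral is invariant under 2π·ℤ shifts of the base point
  have hshiftInt : ∀ (z : ℝ) (j : ℤ),
      (∫ s in (0:ℝ)..t, g ((z - 2*Real.pi*j) + w s)) = ∫ s in (0:ℝ)..t, g (z + w s) := by
    intro z j
    apply intervalIntegral.integral_congr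
    intro s _
    show g ((z - 2*Real.pi*j) + w s) = g (z + w s)
    have e : (z - 2*Real.pi*j) + w s = (z + w s) - 2*Real.pi*j := by ring
    rw [e, hgshift]
  -- disjointness follows from inclusion in the 2δ-balls
  have hdisj : ∀ (a l : Fin m → ℝ),
      (∀ i, circleArc (a i) (l i) ⊆ {y : ℝ | circleDist y (ys i) < 2*δ}) →
      Pairwise fun i j => Disjoint (circleArc (a i) (l i)) (circleArc (a j) (l j)) := by
    intro a l hball i j hij
    rw [Set.disjoint_left]
    intro u hui huj
    have h1 := hball i hui
    have h2 := hball j huj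
    simp only [Set.mem_setOf_eq] at h1 h2
    obtain ⟨j1, hj1⟩ := cD_lt h1
    obtain ⟨j2, hj2⟩ := cD_lt h2
    have hd : circleDist (ys i) (ys j) ≤ |ys i - ys j - 2*Real.pi*((j2 - j1 : ℤ):ℝ)| :=
      cD_le _ _ _
    have he : ys i - ys j - 2*Real.pi*((j2 - j1 : ℤ):ℝ)
        = (u - ys j - 2*Real.pi*j2) - (u - ys i - 2*Real.pi*j1) := by push_cast; ring
    rw [he] at hd
    have habs : |(u - ys j - 2*Real.pi*(j2:ℝ)) - (u - ys i - 2*Real.pi*(j1:ℝ))|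
        ≤ |u - ys j - 2*Real.pi*(j2:ℝ)| + |u - ys i - 2*Real.pi*(j1:ℝ)| := abs_sub _ _
    have hgap2 := hgap i j hij
    linarith
  rcases le_or_gt (K₀ * τ) (δ/4) with hreg | hreg
  · -- large time : short arcs around chosen sublevel points
    set Bi : Fin m → Set ℝ := fun i => {z : ℝ | |z - ys i| < 3*δ/2 ∧
      |∫ s in (0:ℝ)..t, g (z + w s)| ≤ tα} with hBi_def
    set z0 : Fin m → ℝ := fun i => if h : (Bi i).Nonempty then h.some else ys i with hz0_def
    have hz0close : ∀ i, |z0 i - ys i| < 3*δ/2 := by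
      intro i
      by_cases h : (Bi i).Nonempty
      · simp only [hz0_def, dif_pos h]
        exact h.some_mem.1
      · simp only [hz0_def, dif_neg h, sub_self, abs_zero]
        positivity
    have hball : ∀ i, circleArc (z0 i - 2*(K₀*τ)) (4*(K₀*τ))
        ⊆ {y : ℝ | circleDist y (ys i) < 2*δ} := by
      intro i u hu
      obtain ⟨j, hj⟩ := hu
      simp only [Set.mem_Ioo] at hj
      have h1 : |u - 2*Real.pi*j - z0 i| < 2*(K₀*τ) := by
        rw [abs_lt]; constructor <;> [linarith [hj.1]; linarith [hj.2]]
      have h2 := hz0close i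
      simp only [Set.mem_setOf_eq]
      have e : u - ys i - 2*Real.pi*(j:ℝ) = (u - 2*Real.pi*j - z0 i) + (z0 i - ys i) := by ring
      calc circleDist u (ys i) ≤ |u - ys i - 2*Real.pi*(j:ℝ)| := cD_le _ _ _
      _ = |(u - 2*Real.pi*j - z0 i) + (z0 i - ys i)| := by rw [e]
      _ ≤ |u - 2*Real.pi*j - z0 i| + |z0 i - ys i| := abs_add_le _ _
      _ < 2*δ := by linarith
    refine ⟨fun i => z0 i - 2*(K₀*τ), fun i => 4*(K₀*τ), fun i => by positivity,
      hdisj _ _ hball, hball, ?_, ?_⟩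
    · intro y hy
      obtain ⟨hyIco, hyS⟩ := hy
      obtain ⟨i, hi⟩ := hnear y hyIco hyS
      obtain ⟨j, hj⟩ := cD_lt hi
      have hyhabs : |(y - 2*Real.pi*j) - ys i| < 3*δ/2 := by
        have e : (y - 2*Real.pi*j) - ys i = y - ys i - 2*Real.pi*(j:ℝ) := by ring
        rw [e]; exact hj
      have hyhS : |∫ s in (0:ℝ)..t, g ((y - 2*Real.pi*j) + w s)| ≤ tα := by
        rw [hshiftInt y j]; exact hyS
      have hyhB : (y - 2*Real.pi*(j:ℝ)) ∈ Bi i := ⟨hyhabs, hyhS⟩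
      have hne : (Bi i).Nonempty := ⟨_, hyhB⟩
      have hz0mem : z0 i ∈ Bi i := by
        simp only [hz0_def, dif_pos hne]; exact hne.some_mem
      have hd := hdiam i (y - 2*Real.pi*j) (z0 i) hyhabs.le (hz0close i).le hyhS hz0mem.2
      have hda := abs_le.mp hd
      have hK : 0 < K₀*τ := by positivity
      refine Set.mem_iUnion.mpr ⟨i, j, ?_⟩
      simp only [Set.mem_Ioo]
      constructor
      · linarith [hda.1]
      · linarith [hda.2]
    · have hsum : (∑ _i : Fin m, 4*(K₀*τ)) = (m:ℝ) * (4*(K₀*τ)) := by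
        rw [Finset.sum_const, Finset.card_univ, Fintype.card_fin, nsmul_eq_mul]
      rw [hsum, hC_def]
      nlinarith [hτ0, hK₀pos, Nat.cast_nonneg (α := ℝ) m]
  · -- small time : full-size arcs around the critical points
    have hball : ∀ i, circleArc (ys i - 3*δ/2) (3*δ)
        ⊆ {y : ℝ | circleDist y (ys i) < 2*δ} := by
      intro i u hu
      obtain ⟨j, hj⟩ := hu
      simp only [Set.mem_Ioo] at hj
      simp only [Set.mem_setOf_eq]
      calc circleDist u (ys i) ≤ |u - ys i - 2*Real.pi*(j:ℝ)| := cD_le _ _ _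
      _ < 2*δ := by rw [abs_lt]; constructor <;> [linarith [hj.1]; linarith [hj.2]]
    refine ⟨fun i => ys i - 3*δ/2, fun i => 3*δ, fun i => by positivity,
      hdisj _ _ hball, hball, ?_, ?_⟩
    · intro y hy
      obtain ⟨hyIco, hyS⟩ := hy
      obtain ⟨i, hi⟩ := hnear y hyIco hyS
      obtain ⟨j, hj⟩ := cD_lt hi
      have hja := abs_lt.mp hj
      refine Set.mem_iUnion.mpr ⟨i, j, ?_⟩
      simp only [Set.mem_Ioo]
      constructor
      · linarith [hja.1]
      · linarith [hja.2]
    · have hsum : (∑ _i : Fin m, 3*δ) = (m:ℝ) * (3*δ) := by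
        rw [Finset.sum_const, Finset.card_univ, Fintype.card_fin, nsmul_eq_mul]
      rw [hsum, hC_def]
      nlinarith [hτ0, hK₀pos, hδpos, Nat.cast_nonneg (α := ℝ) m,
        mul_lt_mul_of_pos_left hreg (by positivity : (0:ℝ) < 12*((m:ℝ)+1))]
end

section
/- Localization near an even-order critical point (Case 1 of Lemma 2.2). Let y* ∈ ℝ and let n ≥ 2 be an even integer with b^{(j)}(y*) = 0 for 1 ≤ j ≤ n and b^{(n+1)}(y*) > 0. Then there exist δ* > 0 and c₁ > 0, depending only on b, such that b'(y) ≥ c₁ (y − y*)^n for all y with |y − y*| ≤ 3δ*; moreover, for every δ ∈ (0, δ*], every constant c̃ > 0, every t ≥ 1, and every continuous w : [0,t] → ℝ with sup_{0 ≤ s ≤ t} |w(s)| ≤ δ, any y with |y − y*| ≤ 2δ and |S_t(y)| ≤ c̃ t^{1/(n+1)} satisfies | y − y* + t^{−1} ∫_0^t w(s) ds | ≤ C t^{−1/(n+1)}, where C > 0 depends only on b, n and c̃. -/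
open MeasureTheory

lemma myIteratedDerivWithin_eq {f : ℝ → ℝ} (hf : ContDiff ℝ (⊤ : ℕ∞) f)
    {s : Set ℝ} (hs : UniqueDiffOn ℝ s) (n : ℕ) :
    ∀ x ∈ s, iteratedDerivWithin n f s x = iteratedDeriv n f x := by
  induction n generalizing f with
  | zero => intro x hx; simp [iteratedDerivWithin_zero, iteratedDeriv_zero]
  | succ n IH =>
    intro x hx
    rw [iteratedDerivWithin_succ']
    have h1 : Set.EqOn (derivWithin f s) (deriv f) s := fun y hy =>
      ((hf.differentiable (by simp)) y).derivWithin (hs.uniqueDiffWithinAt hy)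
    have hdf : ContDiff ℝ (⊤ : ℕ∞) (deriv f) := (contDiff_infty_iff_deriv.mp hf).2
    calc iteratedDerivWithin n (derivWithin f s) s x
        = iteratedDerivWithin n (deriv f) s x := iteratedDerivWithin_congr h1 hx
      _ = iteratedDeriv n (deriv f) x := IH hdf x hx
      _ = iteratedDeriv (n + 1) f x := by rw [iteratedDeriv_succ']

lemma myTaylor {g : ℝ → ℝ} (hg : ContDiff ℝ (⊤ : ℕ∞) g) {m : ℕ} {y0 x : ℝ}
    (hx : y0 < x) (hvan : ∀ j ≤ m, iteratedDeriv j g y0 = 0) :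
    ∃ ξ ∈ Set.Ioo y0 x,
      g x = iteratedDeriv (m + 1) g ξ * (x - y0) ^ (m + 1) / Nat.factorial (m + 1) := by
  have hs : UniqueDiffOn ℝ (Set.Icc y0 x) := uniqueDiffOn_Icc hx
  have heq := myIteratedDerivWithin_eq hg hs
  have hf : ContDiffOn ℝ m g (Set.Icc y0 x) := (hg.of_le (mod_cast le_top)).contDiffOn
  have hf' : DifferentiableOn ℝ (iteratedDerivWithin m g (Set.Icc y0 x)) (Set.Ioo y0 x) := by
    have hd : DifferentiableOn ℝ (iteratedDeriv m g) (Set.Ioo y0 x) := by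
      intro z hz
      have : ContDiff ℝ (⊤ : ℕ∞) (iteratedDeriv m g) := by
        rw [iteratedDeriv_eq_iterate]; exact hg.iterate_deriv m
      exact ((this.differentiable (by simp)) z).differentiableWithinAt
    exact hd.congr (fun z hz => heq m z (Set.Ioo_subset_Icc_self hz))
  obtain ⟨ξ, hξ, H⟩ := taylor_mean_remainder_lagrange hx.ne
    (by rwa [Set.uIcc_of_le hx.le]) (by rwa [Set.uIcc_of_le hx.le, Set.uIoo_of_le hx.le])
  rw [Set.uIcc_of_le hx.le] at H
  rw [Set.uIoo_of_le hx.le] at hξ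
  refine ⟨ξ, hξ, ?_⟩
  have hT : taylorWithinEval g m (Set.Icc y0 x) y0 x = 0 := by
    rw [taylor_within_apply]
    apply Finset.sum_eq_zero
    intro k hk
    rw [heq k y0 (Set.left_mem_Icc.mpr hx.le),
      hvan k (by simpa using Nat.lt_succ_iff.mp (Finset.mem_range.mp hk))]
    simp
  rw [hT, sub_zero] at H
  rw [H, heq (m + 1) ξ (Set.Ioo_subset_Icc_self hξ)]

lemma myRight {g : ℝ → ℝ} (hg : ContDiff ℝ (⊤ : ℕ∞) g) {m : ℕ} {y0 ε c : ℝ}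
    (hvan : ∀ j ≤ m, iteratedDeriv j g y0 = 0) (hc : 0 ≤ c)
    (hlow : ∀ z, |z - y0| < ε → c ≤ iteratedDeriv (m + 1) g z) :
    ∀ x, y0 < x → x - y0 < ε →
      c / Nat.factorial (m + 1) * (x - y0) ^ (m + 1) ≤ g x := by
  intro x hx hxe
  obtain ⟨ξ, hξ, H⟩ := myTaylor hg hx hvan
  rw [H]
  have hξε : |ξ - y0| < ε := by
    rw [abs_of_pos (by linarith [hξ.1])]; linarith [hξ.2]
  have hD := hlow ξ hξε
  have hp : (0 : ℝ) ≤ (x - y0) ^ (m + 1) := pow_nonneg (by linarith) _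
  have hF : (0 : ℝ) < Nat.factorial (m + 1) := by exact_mod_cast Nat.factorial_pos (m+1)
  rw [div_mul_eq_mul_div]
  gcongr

/-- **Localization near an even-order critical point (Case 1 of Lemma 2.2).** -/
theorem localization_even_critical_point
    (b : ℝ → ℝ) (hb : ContDiff ℝ (⊤ : ℕ∞) b) (hbper : Function.Periodic b (2 * Real.pi))
    (ystar : ℝ) (n : ℕ) (hn : 2 ≤ n) (hneven : Even n)
    (hvanish : ∀ j : ℕ, 1 ≤ j → j ≤ n → iteratedDeriv j b ystar = 0)
    (hpos : 0 < iteratedDeriv (n + 1) b ystar) :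
    ∃ δstar > 0, ∃ c₁ > 0,
      (∀ y : ℝ, |y - ystar| ≤ 3 * δstar → c₁ * (y - ystar) ^ n ≤ deriv b y) ∧
      ∀ ctil : ℝ, 0 < ctil → ∃ C > 0, ∀ δ : ℝ, 0 < δ → δ ≤ δstar →
        ∀ t : ℝ, 1 ≤ t →
        ∀ w : ℝ → ℝ, ContinuousOn w (Set.Icc (0:ℝ) t) →
        (∀ s ∈ Set.Icc (0:ℝ) t, |w s| ≤ δ) →
        ∀ y : ℝ, |y - ystar| ≤ 2 * δ →
          |∫ s in (0:ℝ)..t, deriv b (y + w s)| ≤ ctil * t ^ ((1 : ℝ) / ((n : ℝ) + 1)) →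
          |y - ystar + t⁻¹ * ∫ s in (0:ℝ)..t, w s| ≤ C * t ^ (-(1 : ℝ) / ((n : ℝ) + 1)) := by
  have hg : ContDiff ℝ (⊤ : ℕ∞) (deriv b) := (contDiff_infty_iff_deriv.mp hb).2
  set g := deriv b with hgdef
  obtain ⟨m, hm⟩ : ∃ m, n = m + 1 := ⟨n - 1, by omega⟩
  have hvg : ∀ j < n, iteratedDeriv j g ystar = 0 := by
    intro j hj
    have h := hvanish (j + 1) (by omega) (by omega)
    rwa [iteratedDeriv_succ'] at h
  have hLpos : 0 < iteratedDeriv n g ystar := by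
    rw [iteratedDeriv_succ'] at hpos; exact hpos
  set L := iteratedDeriv n g ystar with hLdef
  -- continuity of the n-th derivative of g
  have hcont : Continuous (iteratedDeriv n g) :=
    hg.continuous_iteratedDeriv n (mod_cast le_top)
  obtain ⟨ε, hε0, hεb⟩ := Metric.continuousAt_iff.mp (hcont.continuousAt (x := ystar))
    (L / 2) (by positivity)
  have hlow : ∀ z, |z - ystar| < ε → L / 2 ≤ iteratedDeriv n g z := by
    intro z hz
    have h1 := hεb (x := z) (by rw [Real.dist_eq]; exact hz)
    rw [Real.dist_eq, ← hLdef] at h1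
    have h2 := abs_lt.mp h1
    linarith [h2.1]
  have hvan' : ∀ j ≤ m, iteratedDeriv j g ystar = 0 := fun j hj => hvg j (by omega)
  have hcL : (0:ℝ) ≤ L / 2 := by positivity
  set c₁ : ℝ := (L / 2) / Nat.factorial n with hc₁def
  have hc₁pos : 0 < c₁ := by
    rw [hc₁def]
    have : (0:ℝ) < Nat.factorial n := by exact_mod_cast Nat.factorial_pos n
    positivity
  have key : ∀ y : ℝ, |y - ystar| ≤ 3 * (ε / 4) → c₁ * (y - ystar) ^ n ≤ g y := by
    intro y hy
    rcases lt_trichotomy y ystar with hlt | heq | hgt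
    · -- left side: reflect
      set G : ℝ → ℝ := fun z => g (2 * ystar + -z) with hGdef
      have hGc : ContDiff ℝ (⊤ : ℕ∞) G := hg.comp (contDiff_const.add contDiff_id.neg)
      have hGiter : ∀ j z, iteratedDeriv j G z
          = (-1 : ℝ) ^ j • iteratedDeriv j g (2 * ystar + -z) := by
        intro j z
        have h1 := iteratedDeriv_comp_neg j (fun u => g (2 * ystar + u)) z
        rwa [iteratedDeriv_comp_const_add] at h1
      have hGvan : ∀ j ≤ m, iteratedDeriv j G ystar = 0 := by
        intro j hj
        rw [hGiter]
        have h2 : 2 * ystar + -ystar = ystar := by ring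
        rw [h2, hvan' j hj, smul_zero]
      have hGlow : ∀ z, |z - ystar| < ε → L / 2 ≤ iteratedDeriv (m + 1) G z := by
        intro z hz
        rw [hGiter, ← hm, hneven.neg_one_pow, one_smul]
        apply hlow
        have h3 : 2 * ystar + -z - ystar = -(z - ystar) := by ring
        rw [h3, abs_neg]; exact hz
      have hres := myRight hGc hGvan hcL hGlow (2 * ystar + -y) (by linarith)
        (by rw [abs_le] at hy; linarith [hy.1])
      have hGy : G (2 * ystar + -y) = g y := by
        show g (2 * ystar + -(2 * ystar + -y)) = g y
        norm_num
      rw [← hm, hGy] at hres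
      have hxx : 2 * ystar + -y - ystar = -(y - ystar) := by ring
      rw [hxx, hneven.neg_pow] at hres
      exact hres
    · rw [heq]
      have h0 := hvg 0 (by omega)
      rw [iteratedDeriv_zero] at h0
      simp [h0, zero_pow (by omega : n ≠ 0)]
    · have hres := myRight hg hvan' hcL (by rw [← hm]; exact hlow) y hgt
        (by rw [abs_le] at hy; linarith [hy.2])
      rw [← hm] at hres
      exact hres
  refine ⟨ε / 4, by positivity, c₁, hc₁pos, key, ?_⟩
  intro ctil hctil
  refine ⟨(ctil / c₁) ^ ((1:ℝ) / (n:ℝ)), Real.rpow_pos_of_pos (by positivity) _, ?_⟩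
  intro δ hδ0 hδstar t ht w hwc hwb y hy hI
  have ht0 : (0:ℝ) < t := lt_of_lt_of_le one_pos ht
  set J := ∫ s in (0:ℝ)..t, w s with hJdef
  have hpt : ∀ s ∈ Set.Icc (0:ℝ) t, c₁ * (y - ystar + w s) ^ n ≤ g (y + w s) := by
    intro s hs
    have hws := hwb s hs
    have h1 : |y + w s - ystar| ≤ 3 * (ε / 4) := by
      have h2 : y + w s - ystar = (y - ystar) + w s := by ring
      rw [h2]
      calc |(y - ystar) + w s| ≤ |y - ystar| + |w s| := abs_add_le _ _
        _ ≤ 2 * δ + δ := by linarith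
        _ ≤ 3 * (ε / 4) := by linarith
    have h3 := key (y + w s) h1
    have h4 : y + w s - ystar = y - ystar + w s := by ring
    rwa [h4] at h3
  have hwint : IntervalIntegrable w volume 0 t := hwc.intervalIntegrable_of_Icc ht0.le
  have hfc : ContinuousOn (fun s => y - ystar + w s) (Set.Icc (0:ℝ) t) :=
    continuousOn_const.add hwc
  have hfnc : ContinuousOn (fun s => (y - ystar + w s) ^ n) (Set.Icc (0:ℝ) t) := hfc.pow n
  have hgwc : ContinuousOn (fun s => g (y + w s)) (Set.Icc (0:ℝ) t) :=
    hg.continuous.comp_continuousOn (continuousOn_const.add hwc)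
  have hstep1 : (∫ s in (0:ℝ)..t, c₁ * (y - ystar + w s) ^ n) ≤ ∫ s in (0:ℝ)..t, g (y + w s) :=
    intervalIntegral.integral_mono_on ht0.le
      ((continuousOn_const.mul hfnc).intervalIntegrable_of_Icc ht0.le)
      (hgwc.intervalIntegrable_of_Icc ht0.le) hpt
  set μ := volume.restrict (Set.Ioc (0:ℝ) t) with hμdef
  haveI : IsFiniteMeasure μ :=
    ⟨by rw [hμdef, Measure.restrict_apply_univ, Real.volume_Ioc]; exact ENNReal.ofReal_lt_top⟩
  haveI : NeZero μ := ⟨by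
    rw [hμdef, Ne, Measure.restrict_eq_zero, Real.volume_Ioc]
    simp only [sub_zero, ENNReal.ofReal_eq_zero, not_le]
    exact ht0⟩
  have hfi : Integrable (fun s => y - ystar + w s) μ :=
    (hfc.integrableOn_Icc).mono_set Set.Ioc_subset_Icc_self
  have hgi : Integrable ((fun x : ℝ => x ^ n) ∘ (fun s => y - ystar + w s)) μ :=
    (hfnc.integrableOn_Icc).mono_set Set.Ioc_subset_Icc_self
  have hjensen := (hneven.convexOn_pow (𝕜 := ℝ)).map_average_le
    (continuous_pow n).continuousOn isClosed_univ
    (Filter.Eventually.of_forall fun _ => Set.mem_univ _) hfi hgi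
  have hμuniv : (μ Set.univ).toReal = t := by
    rw [hμdef, Measure.restrict_apply_univ, Real.volume_Ioc, sub_zero,
      ENNReal.toReal_ofReal ht0.le]
  have havg1 : (⨍ x, (y - ystar + w x) ∂μ) = y - ystar + t⁻¹ * J := by
    rw [average_eq, measureReal_def, hμuniv, smul_eq_mul]
    have h5 : (∫ x, (y - ystar + w x) ∂μ) = ∫ s in (0:ℝ)..t, (y - ystar + w s) := by
      rw [intervalIntegral.integral_of_le ht0.le, hμdef]
    rw [h5, intervalIntegral.integral_add intervalIntegrable_const hwint,
      intervalIntegral.integral_const, ← hJdef]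
    simp only [sub_zero, smul_eq_mul]
    field_simp
  have havg2 : (⨍ x, (y - ystar + w x) ^ n ∂μ)
      = t⁻¹ * ∫ s in (0:ℝ)..t, (y - ystar + w s) ^ n := by
    rw [average_eq, measureReal_def, hμuniv, smul_eq_mul, intervalIntegral.integral_of_le ht0.le, hμdef]
  set A := y - ystar + t⁻¹ * J with hAdef
  have hjensen' : A ^ n ≤ t⁻¹ * ∫ s in (0:ℝ)..t, (y - ystar + w s) ^ n := by
    rw [← havg1, ← havg2]; exact hjensen
  have hchain : c₁ * (t * A ^ n) ≤ ctil * t ^ ((1:ℝ) / ((n:ℝ) + 1)) := by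
    have h6 : t * A ^ n ≤ ∫ s in (0:ℝ)..t, (y - ystar + w s) ^ n := by
      have h := mul_le_mul_of_nonneg_left hjensen' ht0.le
      rwa [← mul_assoc, mul_inv_cancel₀ ht0.ne', one_mul] at h
    have h7 : c₁ * (t * A ^ n) ≤ c₁ * ∫ s in (0:ℝ)..t, (y - ystar + w s) ^ n :=
      mul_le_mul_of_nonneg_left h6 hc₁pos.le
    have h8 : c₁ * (∫ s in (0:ℝ)..t, (y - ystar + w s) ^ n) ≤ ∫ s in (0:ℝ)..t, g (y + w s) := by
      rw [← intervalIntegral.integral_const_mul]; exact hstep1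
    calc c₁ * (t * A ^ n) ≤ _ := h7
      _ ≤ ∫ s in (0:ℝ)..t, g (y + w s) := h8
      _ ≤ |∫ s in (0:ℝ)..t, g (y + w s)| := le_abs_self _
      _ ≤ ctil * t ^ ((1:ℝ) / ((n:ℝ) + 1)) := hI
  have habs : |A| ^ ((n:ℝ)) ≤ (ctil / c₁) * t ^ ((1:ℝ) / ((n:ℝ) + 1) - 1) := by
    rw [Real.rpow_natCast, hneven.pow_abs, Real.rpow_sub ht0, Real.rpow_one,
      div_mul_div_comm, le_div_iff₀ (by positivity)]
    nlinarith [hchain]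
  have hnR : (0:ℝ) < (n:ℝ) := by exact_mod_cast (by omega : 0 < n)
  have hfin := Real.rpow_le_rpow (by positivity) habs (by positivity : (0:ℝ) ≤ 1 / (n:ℝ))
  rw [← Real.rpow_mul (abs_nonneg A), mul_one_div, div_self hnR.ne', Real.rpow_one] at hfin
  rw [Real.mul_rpow (by positivity) (by positivity), ← Real.rpow_mul ht0.le] at hfin
  have hexp : ((1:ℝ) / ((n:ℝ) + 1) - 1) * (1 / (n:ℝ)) = -(1:ℝ) / ((n:ℝ) + 1) := by
    have h9 : (n:ℝ) + 1 ≠ 0 := by positivity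
    field_simp
    ring
  rw [hexp] at hfin
  exact hfin
end

section
/- Monotonicity estimate near an odd-order critical point (Case 2 of Lemma 2.2). Let y* ∈ ℝ and let n ≥ 1 be an odd integer with b^{(j)}(y*) = 0 for 1 ≤ j ≤ n and b^{(n+1)}(y*) > 0. Then there exist δ* > 0 and c₂ > 0, depending only on b and n, such that b''(y) ≥ c₂ (y − y*)^{n−1} for all y with |y − y*| ≤ 3δ*; moreover, for every δ ∈ (0, δ*], every t > 0, every continuous w : [0,t] → ℝ with sup_{0 ≤ s ≤ t} |w(s)| ≤ δ, and all points y > ȳ with |y − y*| ≤ 2δ and |ȳ − y*| ≤ 2δ, one has S_t(y) − S_t(ȳ) ≥ c₃ t (y − ȳ)^n, where c₃ > 0 depends only on b and n. In particular S_t is strictly increasing on [y* − 2δ, y* + 2δ] and has at most one zero there. -/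
open MeasureTheory


lemma pow_sub_pow_aux (m : ℕ) (hm : Even m) {a b : ℝ} (hab : a ≤ b) :
    ((b - a) / 2) ^ (m + 1) ≤ b ^ (m + 1) - a ^ (m + 1) := by
  set c : ℝ := (b - a) / 2 with hc
  have hc0 : 0 ≤ c := by simp [hc]; linarith
  have hb2 : b = a + 2 * c := by simp [hc]; ring
  have hodd : Odd (m + 1) := Even.add_one hm
  rcases le_or_gt c b with hcb | hbc
  · -- b ≥ c
    rcases le_or_gt a 0 with ha | ha
    · have h1 : a ^ (m + 1) ≤ 0 := hodd.pow_nonpos ha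
      have h2 : c ^ (m + 1) ≤ b ^ (m + 1) := pow_le_pow_left₀ hc0 hcb _
      linarith
    · have h2 : a ^ (m + 1) + (2 * c) ^ (m + 1) ≤ (a + 2 * c) ^ (m + 1) :=
        pow_add_pow_le ha.le (by linarith) (Nat.succ_ne_zero m)
      have h3 : c ^ (m + 1) ≤ (2 * c) ^ (m + 1) := pow_le_pow_left₀ hc0 (by linarith) _
      rw [hb2]; linarith
  · -- b < c, so -a ≥ c
    have hac : a ≤ -c := by linarith
    rcases le_or_gt 0 b with hb0 | hb0
    · have h1 : c ^ (m + 1) ≤ (-a) ^ (m + 1) := pow_le_pow_left₀ hc0 (by linarith) _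
      rw [hodd.neg_pow] at h1
      have h2 : 0 ≤ b ^ (m + 1) := pow_nonneg hb0 _
      linarith
    · have h2 : (-b) ^ (m + 1) + (2 * c) ^ (m + 1) ≤ (-b + 2 * c) ^ (m + 1) :=
        pow_add_pow_le (by linarith) (by linarith) (Nat.succ_ne_zero m)
      have h3 : c ^ (m + 1) ≤ (2 * c) ^ (m + 1) := pow_le_pow_left₀ hc0 (by linarith) _
      have h4 : -b + 2 * c = -a := by rw [hb2]; ring
      rw [h4, hodd.neg_pow, hodd.neg_pow] at h2
      linarith

lemma itdw_eq {f : ℝ → ℝ} (hf : ContDiff ℝ (⊤ : ℕ∞) f) (k : ℕ) {s : Set ℝ}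
    (hs : UniqueDiffOn ℝ s) {z : ℝ} (hz : z ∈ s) :
    iteratedDerivWithin k f s z = iteratedDeriv k f z := by
  rw [iteratedDerivWithin_eq_iteratedFDerivWithin, iteratedDeriv_eq_iteratedFDeriv]
  congr 1
  have h1 : HasFTaylorSeriesUpToOn (k : ℕ∞) f (ftaylorSeries ℝ f) s := by
    have h2 := (contDiffOn_univ.mpr (hf.of_le (by exact_mod_cast le_top))).ftaylorSeriesWithin
      uniqueDiffOn_univ (𝕜 := ℝ) (n := (k : ℕ∞))
    rw [ftaylorSeriesWithin_univ] at h2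
    exact h2.mono (Set.subset_univ s)
  exact (h1.eq_iteratedFDerivWithin_of_uniqueDiffOn (by exact_mod_cast le_rfl) hs hz).symm

lemma taylor_right {g : ℝ → ℝ} (hg : ContDiff ℝ (⊤ : ℕ∞) g) (m : ℕ)
    {y0 x ε C : ℝ} (hx : y0 < x) (hxε : x - y0 ≤ ε)
    (hzero : ∀ j, j < m → iteratedDeriv j g y0 = 0)
    (hC : ∀ z, |z - y0| ≤ ε → C ≤ iteratedDeriv m g z) :
    C / m.factorial * (x - y0) ^ m ≤ g x := by
  rcases Nat.eq_zero_or_pos m with hm0 | hm0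
  · subst hm0
    simpa using hC x (by rw [abs_of_pos (by linarith)]; linarith)
  · obtain ⟨m', rfl⟩ : ∃ m', m = m' + 1 := ⟨m - 1, (Nat.succ_pred_eq_of_pos hm0).symm⟩
    have huniq : UniqueDiffOn ℝ (Set.Icc y0 x) := uniqueDiffOn_Icc hx
    have hcd : ContDiffOn ℝ m' g (Set.Icc y0 x) := (hg.of_le (by exact_mod_cast le_top)).contDiffOn
    have hdiff : DifferentiableOn ℝ (iteratedDerivWithin m' g (Set.Icc y0 x))
        (Set.Ioo y0 x) := by
      have hd : Differentiable ℝ (iteratedDeriv m' g) := by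
        apply hg.differentiable_iteratedDeriv m'
        exact_mod_cast WithTop.coe_lt_top _
      exact hd.differentiableOn.congr fun z hz =>
        itdw_eq hg m' huniq (Set.mem_of_mem_of_subset hz Set.Ioo_subset_Icc_self)
    have html := taylor_mean_remainder_lagrange hx.ne (f := g) (n := m')
      (by rw [Set.uIcc_of_lt hx]; exact hcd)
      (by rw [Set.uIcc_of_lt hx, Set.uIoo_of_lt hx]; exact hdiff)
    rw [Set.uIcc_of_lt hx, Set.uIoo_of_lt hx] at html
    obtain ⟨x', hx', heq⟩ := html
    have htay : taylorWithinEval g m' (Set.Icc y0 x) y0 x = 0 := by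
      rw [taylor_within_apply]
      apply Finset.sum_eq_zero
      intro k hk
      rw [itdw_eq hg k huniq (Set.left_mem_Icc.mpr hx.le),
        hzero k (by have := Finset.mem_range.mp hk; omega)]
      simp
    rw [htay, sub_zero] at heq
    have hx'C : C ≤ iteratedDeriv (m' + 1) g x' := by
      apply hC
      rw [abs_of_pos (by linarith [hx'.1])]
      linarith [hx'.2]
    rw [itdw_eq hg (m' + 1) huniq (Set.mem_of_mem_of_subset hx' Set.Ioo_subset_Icc_self)] at heq
    rw [heq]
    have hp : (0:ℝ) < (x - y0) ^ (m' + 1) := pow_pos (by linarith) _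
    have hf : (0:ℝ) < (m' + 1).factorial := by positivity
    rw [div_mul_eq_mul_div, mul_div_assoc, mul_div_assoc]
    gcongr

lemma taylor_two {g : ℝ → ℝ} (hg : ContDiff ℝ (⊤ : ℕ∞) g) (m : ℕ) (hm : Even m)
    {y0 ε C : ℝ}
    (hzero : ∀ j, j < m → iteratedDeriv j g y0 = 0)
    (hC : ∀ z, |z - y0| ≤ ε → C ≤ iteratedDeriv m g z) :
    ∀ x, |x - y0| ≤ ε → C / m.factorial * (x - y0) ^ m ≤ g x := by
  intro x hxε
  rcases lt_trichotomy x y0 with hlt | heq | hgt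
  · -- reflection
    set G : ℝ → ℝ := fun z => g (2 * y0 - z) with hGdef
    have hG : ContDiff ℝ (⊤ : ℕ∞) G := hg.comp (contDiff_const.sub contDiff_id)
    have hGD : ∀ (j : ℕ) (a : ℝ), iteratedDeriv j G a
        = (-1 : ℝ) ^ j * iteratedDeriv j g (2 * y0 - a) := by
      intro j a
      have h2 := iteratedDeriv_comp_neg j (fun u => g (2 * y0 + u)) a
      rw [iteratedDeriv_comp_const_add] at h2
      have h1 : iteratedDeriv j G a
          = iteratedDeriv j (fun x => g (2 * y0 + -x)) a := by
        simp only [hGdef, sub_eq_add_neg]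
      rw [h1, h2, smul_eq_mul, sub_eq_add_neg]
    have hres := taylor_right hG m (y0 := y0) (x := 2 * y0 - x) (ε := ε) (C := C)
      (by linarith) (by rw [abs_le] at hxε; linarith)
      (fun j hj => by rw [hGD, show (2:ℝ) * y0 - y0 = y0 by ring, hzero j hj, mul_zero])
      (fun z hz => by
        rw [hGD, hm.neg_one_pow, one_mul]
        apply hC
        rw [show 2 * y0 - z - y0 = -(z - y0) by ring, abs_neg]
        exact hz)
    have h2 : G (2 * y0 - x) = g x := by simp [hGdef]
    have h3 : (2 * y0 - x - y0) ^ m = (x - y0) ^ m := by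
      rw [show 2 * y0 - x - y0 = -(x - y0) by ring, hm.neg_pow]
    rw [h2, h3] at hres
    exact hres
  · subst heq
    rcases Nat.eq_zero_or_pos m with hm0 | hm0
    · subst hm0; simpa using hC x (by simpa using (abs_nonneg _).trans hxε)
    · have h0 : g x = 0 := by simpa using hzero 0 hm0
      rw [h0, sub_self, zero_pow hm0.ne', mul_zero]
  · exact taylor_right hg m hgt (by rw [abs_le] at hxε; linarith) hzero hC

/-- **Monotonicity estimate near an odd-order critical point (Case 2 of Lemma 2.2).** -/
theorem monotonicity_odd_critical_point
    (b : ℝ → ℝ) (hb : ContDiff ℝ (⊤ : ℕ∞) b) (hbper : Function.Periodic b (2 * Real.pi))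
    (ystar : ℝ) (n : ℕ) (hn : 1 ≤ n) (hnodd : Odd n)
    (hvanish : ∀ j : ℕ, 1 ≤ j → j ≤ n → iteratedDeriv j b ystar = 0)
    (hpos : 0 < iteratedDeriv (n + 1) b ystar) :
    ∃ δstar > 0, ∃ c₂ > 0,
      (∀ y : ℝ, |y - ystar| ≤ 3 * δstar →
        c₂ * (y - ystar) ^ (n - 1) ≤ deriv (deriv b) y) ∧
      ∃ c₃ > 0, ∀ δ : ℝ, 0 < δ → δ ≤ δstar →
        ∀ t : ℝ, 0 < t →
        ∀ w : ℝ → ℝ, ContinuousOn w (Set.Icc (0:ℝ) t) →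
        (∀ s ∈ Set.Icc (0:ℝ) t, |w s| ≤ δ) →
        (∀ y ybar : ℝ, ybar < y → |y - ystar| ≤ 2 * δ → |ybar - ystar| ≤ 2 * δ →
          c₃ * t * (y - ybar) ^ n
            ≤ (∫ s in (0:ℝ)..t, deriv b (y + w s))
              - (∫ s in (0:ℝ)..t, deriv b (ybar + w s))) ∧
        StrictMonoOn (fun y : ℝ => ∫ s in (0:ℝ)..t, deriv b (y + w s))
          (Set.Icc (ystar - 2 * δ) (ystar + 2 * δ)) ∧
        Set.Subsingleton {y ∈ Set.Icc (ystar - 2 * δ) (ystar + 2 * δ) |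
          (∫ s in (0:ℝ)..t, deriv b (y + w s)) = 0} := by
  set m : ℕ := n - 1 with hm
  have hnm : n = m + 1 := (Nat.succ_pred_eq_of_pos hn).symm
  have hmeven : Even m := by
    rcases hnodd with ⟨k, hk⟩; exact ⟨k, by omega⟩
  set A : ℝ := iteratedDeriv (n + 1) b ystar with hA
  set g : ℝ → ℝ := deriv (deriv b) with hgdef
  have hb1 : ContDiff ℝ (⊤ : ℕ∞) (deriv b) := (contDiff_infty_iff_deriv.mp hb).2
  have hg : ContDiff ℝ (⊤ : ℕ∞) g := (contDiff_infty_iff_deriv.mp hb1).2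
  have hgit : ∀ j : ℕ, iteratedDeriv j g = iteratedDeriv (j + 2) b := by
    intro j
    have h1 : iteratedDeriv (j + 1 + 1) b = iteratedDeriv j g := by
      rw [iteratedDeriv_succ', iteratedDeriv_succ']
    rw [← h1]
  -- continuity gives a neighborhood where the (n+1)-st derivative is ≥ A/2
  have hcont : ContinuousAt (iteratedDeriv (n + 1) b) ystar :=
    (hb.continuous_iteratedDeriv (n + 1) (by exact_mod_cast le_top)).continuousAt
  obtain ⟨ε, hε, hball⟩ := Metric.continuousAt_iff.mp hcont (A / 2) (by positivity)
  set ε' : ℝ := ε / 2 with hε'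
  have hε'pos : 0 < ε' := by positivity
  have hC : ∀ z : ℝ, |z - ystar| ≤ ε' → A / 2 ≤ iteratedDeriv (n + 1) b z := by
    intro z hz
    have h1 : dist z ystar < ε := by
      rw [Real.dist_eq, abs_lt]
      rw [abs_le, hε'] at hz
      constructor <;> linarith [hz.1, hz.2]
    have h2 := hball h1
    rw [Real.dist_eq, ← hA] at h2
    have h3 := (abs_lt.mp h2).1
    linarith
  set δstar : ℝ := ε' / 3 with hδstar
  set c₂ : ℝ := A / 2 / m.factorial with hc₂
  have hc₂pos : 0 < c₂ := by
    have : (0:ℝ) < m.factorial := by exact_mod_cast m.factorial_pos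
    positivity
  have hpart1 : ∀ y : ℝ, |y - ystar| ≤ 3 * δstar → c₂ * (y - ystar) ^ m ≤ g y := by
    have h := taylor_two hg m hmeven (y0 := ystar) (ε := ε') (C := A / 2)
      (fun j hj => by
        rw [hgit j]
        exact hvanish (j + 2) (by omega) (by omega))
      (fun z hz => by
        rw [hgit m, show m + 2 = n + 1 by omega]
        exact hC z hz)
    intro y hy
    exact h y (by rw [hδstar] at hy; linarith [hy])
  have hn0 : (0:ℝ) < n := by exact_mod_cast hn
  set c₃ : ℝ := c₂ / ((n : ℝ) * 2 ^ n) with hc₃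
  have hc₃pos : 0 < c₃ := by positivity
  refine ⟨δstar, by positivity, c₂, hc₂pos, hpart1, c₃, hc₃pos, ?_⟩
  intro δ hδ hδs t ht w hw hwb
  have hb'cont : Continuous (deriv b) := hb1.continuous
  have hgcont : Continuous g := hg.continuous
  have hbdiff : Differentiable ℝ (deriv b) := hb1.differentiable (by simp)
  -- key pointwise estimate
  have key : ∀ y ybar : ℝ, ybar < y → |y - ystar| ≤ 2 * δ → |ybar - ystar| ≤ 2 * δ →
      ∀ s ∈ Set.Icc (0:ℝ) t,
        c₃ * (y - ybar) ^ n ≤ deriv b (y + w s) - deriv b (ybar + w s) := by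
    intro y ybar hyy hy hybar s hs
    have hws : |w s| ≤ δ := hwb s hs
    rw [abs_le] at hy hybar hws
    set a1 : ℝ := ybar + w s with ha1
    set b1 : ℝ := y + w s with hb1'
    have hab : a1 < b1 := by rw [ha1, hb1']; linarith
    have hftc : ∫ z in a1..b1, g z = deriv b b1 - deriv b a1 :=
      intervalIntegral.integral_eq_sub_of_hasDerivAt
        (fun z _ => (hbdiff z).hasDerivAt) (hgcont.intervalIntegrable _ _)
    have hmono : ∫ z in a1..b1, c₂ * (z - ystar) ^ m ≤ ∫ z in a1..b1, g z := by
      apply intervalIntegral.integral_mono_on hab.le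
        ((continuous_const.mul ((continuous_id.sub continuous_const).pow m)).intervalIntegrable _ _)
        (hgcont.intervalIntegrable _ _)
      intro z hz
      apply hpart1
      rw [abs_le]
      simp only [id_eq]
      have h1 := hz.1
      have h2 := hz.2
      rw [ha1] at h1
      rw [hb1'] at h2
      constructor <;>
        linarith [h1, h2, hybar.1, hybar.2, hws.1, hws.2, hy.1, hy.2, hδs]
    have hcomp : ∫ z in a1..b1, c₂ * (z - ystar) ^ m
        = c₂ * (((b1 - ystar) ^ (m + 1) - (a1 - ystar) ^ (m + 1)) / (m + 1)) := by
      rw [intervalIntegral.integral_const_mul]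
      congr 1
      rw [show (fun z : ℝ => (z - ystar) ^ m) = fun z : ℝ => (fun u : ℝ => u ^ m) (z - ystar) from rfl]
      rw [intervalIntegral.integral_comp_sub_right (fun u : ℝ => u ^ m) ystar, integral_pow]
    have hps : ((y - ybar) / 2) ^ (m + 1) ≤ (b1 - ystar) ^ (m + 1) - (a1 - ystar) ^ (m + 1) := by
      have h := pow_sub_pow_aux m hmeven (a := a1 - ystar) (b := b1 - ystar) (by linarith)
      rw [show b1 - ystar - (a1 - ystar) = y - ybar by rw [ha1, hb1']; ring] at h
      exact h
    have heq : c₂ * (((y - ybar) / 2) ^ (m + 1) / (m + 1)) = c₃ * (y - ybar) ^ n := by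
      rw [hc₃, hnm]
      have hfp : ((m:ℝ) + 1) ≠ 0 := by positivity
      rw [div_pow]
      push_cast
      rw [div_div, ← mul_div_assoc, div_mul_eq_mul_div, mul_comm ((2:ℝ) ^ (m + 1))]
      rw [hc₂]
      ring
    calc c₃ * (y - ybar) ^ n = c₂ * (((y - ybar) / 2) ^ (m + 1) / (m + 1)) := heq.symm
      _ ≤ c₂ * (((b1 - ystar) ^ (m + 1) - (a1 - ystar) ^ (m + 1)) / (m + 1)) := by
          exact mul_le_mul_of_nonneg_left
            ((div_le_div_iff_of_pos_right (by positivity)).mpr hps) hc₂pos.le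
      _ = ∫ z in a1..b1, c₂ * (z - ystar) ^ m := hcomp.symm
      _ ≤ ∫ z in a1..b1, g z := hmono
      _ = deriv b b1 - deriv b a1 := hftc
  have hintg : ∀ y : ℝ, IntervalIntegrable (fun s => deriv b (y + w s)) volume 0 t := by
    intro y
    apply ContinuousOn.intervalIntegrable
    rw [Set.uIcc_of_le ht.le]
    exact hb'cont.comp_continuousOn (continuousOn_const.add hw)
  have main1 : ∀ y ybar : ℝ, ybar < y → |y - ystar| ≤ 2 * δ → |ybar - ystar| ≤ 2 * δ →
      c₃ * t * (y - ybar) ^ n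
        ≤ (∫ s in (0:ℝ)..t, deriv b (y + w s)) - ∫ s in (0:ℝ)..t, deriv b (ybar + w s) := by
    intro y ybar hyy hy hybar
    have h1 : (∫ s in (0:ℝ)..t, deriv b (y + w s)) - ∫ s in (0:ℝ)..t, deriv b (ybar + w s)
        = ∫ s in (0:ℝ)..t, (deriv b (y + w s) - deriv b (ybar + w s)) :=
      (intervalIntegral.integral_sub (hintg y) (hintg ybar)).symm
    have h2 : ∫ s in (0:ℝ)..t, c₃ * (y - ybar) ^ n
        ≤ ∫ s in (0:ℝ)..t, (deriv b (y + w s) - deriv b (ybar + w s)) :=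
      intervalIntegral.integral_mono_on ht.le intervalIntegrable_const
        ((hintg y).sub (hintg ybar)) (fun s hs => key y ybar hyy hy hybar s hs)
    rw [intervalIntegral.integral_const, smul_eq_mul, sub_zero] at h2
    rw [h1]
    calc c₃ * t * (y - ybar) ^ n = t * (c₃ * (y - ybar) ^ n) := by ring
      _ ≤ _ := h2
  have smono : StrictMonoOn (fun y : ℝ => ∫ s in (0:ℝ)..t, deriv b (y + w s))
      (Set.Icc (ystar - 2 * δ) (ystar + 2 * δ)) := by
    intro y1 h1 y2 h2 h12
    have ha1 : |y1 - ystar| ≤ 2 * δ := abs_le.mpr ⟨by linarith [h1.1], by linarith [h1.2]⟩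
    have ha2 : |y2 - ystar| ≤ 2 * δ := abs_le.mpr ⟨by linarith [h2.1], by linarith [h2.2]⟩
    have hmain := main1 y2 y1 h12 ha2 ha1
    have hp : 0 < c₃ * t * (y2 - y1) ^ n :=
      mul_pos (mul_pos hc₃pos ht) (pow_pos (sub_pos.mpr h12) n)
    simp only
    linarith
  exact ⟨main1, smono, fun y1 hy1 y2 hy2 =>
    smono.injOn hy1.1 hy2.1 (hy1.2.trans hy2.2.symm)⟩
end

section
/- Mixing estimate on a single good interval (deterministic form of Lemma 4.1). There exists a universal constant C > 0 such that the following holds. Let φ : ℝ → ℝ be twice continuously differentiable and 2π-periodic, let β, a ∈ ℝ, and define Φ(x,y) := (x + β − φ(y), y + a) (modulo 2π in each coordinate). Let J ⊆ ℝ be an interval of length at most 2π on which |φ'(y)| ≥ Λ for some Λ ≥ 1 and ∫_J |(d/dy)(1/φ'(y))| dy ≤ M. Then for every continuously differentiable f0 : ℝ² → ℝ, 2π-periodic in both variables with ∫_0^{2π} f0(x,y) dx = 0 for all y, every 2π-periodic Lipschitz g : ℝ → ℝ, and every x ∈ ℝ, | ∫_J f0(Φ(x,y)) g(y) dy | ≤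 C ( Λ^{−1} + M ) ( sup_{x,y} |f0(x,y)| + sup_{x,y} |∂_y f0(x,y)| ) ( sup_y |g(y)| + ess sup_y |g'(y)| ). -/
open MeasureTheory Set Filter intervalIntegral

set_option maxHeartbeats 4000000

theorem lipschitz_integral_deriv {K : NNReal} {g : ℝ → ℝ} (hg : LipschitzWith K g)
    {a b : ℝ} (hab : a ≤ b) : ∫ y in a..b, deriv g y = g b - g a := by
  set k : ℝ := (K : ℝ) with hk
  have hk0 : 0 ≤ k := K.coe_nonneg
  have hlip : ∀ s t : ℝ, s ≤ t → |g t - g s| ≤ k * (t - s) := by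
    intro s t hst
    have := hg.dist_le_mul t s
    rw [Real.dist_eq, Real.dist_eq] at this
    simpa [abs_of_nonneg (sub_nonneg.2 hst)] using this
  set m : ℝ → ℝ := fun y => g y + (k + 1) * y with hm
  set m₂ : ℝ → ℝ := fun y => k * y - g y with hm₂
  have hmono : Monotone m := by
    intro s t hst
    have h2 := abs_le.1 (hlip s t hst)
    simp only [hm]
    nlinarith [h2.1, h2.2]
  have hmono₂ : Monotone m₂ := by
    intro s t hst
    have h2 := abs_le.1 (hlip s t hst)
    simp only [hm₂]
    nlinarith [h2.1, h2.2]
  have hgc : Continuous g := hg.continuous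
  have hmc : Continuous m := by continuity
  have hmc₂ : Continuous m₂ := by continuity
  set S : StieltjesFunction ℝ := ⟨m, hmono, fun x => (hmc.continuousAt).continuousWithinAt⟩ with hS
  set S₂ : StieltjesFunction ℝ := ⟨m₂, hmono₂, fun x => (hmc₂.continuousAt).continuousWithinAt⟩ with hS₂
  haveI : IsLocallyFiniteMeasure (S.measure + S₂.measure) := by
    constructor
    intro x
    obtain ⟨s, hs, hsf⟩ := (S.measure.finiteAt_nhds x)
    obtain ⟨t, ht, htf⟩ := (S₂.measure.finiteAt_nhds x)
    refine ⟨s ∩ t, inter_mem hs ht, ?_⟩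
    rw [Measure.add_apply]
    exact ENNReal.add_lt_top.2 ⟨lt_of_le_of_lt (measure_mono inter_subset_left) hsf,
      lt_of_le_of_lt (measure_mono inter_subset_right) htf⟩
  have hkey : S.measure + S₂.measure = (ENNReal.ofReal (2 * k + 1)) • volume := by
    refine Measure.ext_of_Ioc _ _ (fun s t hst => ?_)
    rw [Measure.add_apply, StieltjesFunction.measure_Ioc, StieltjesFunction.measure_Ioc,
      Measure.smul_apply, Real.volume_Ioc, smul_eq_mul,
      ← ENNReal.ofReal_mul (by positivity)]
    rw [← ENNReal.ofReal_add (sub_nonneg.2 (hmono hst.le)) (sub_nonneg.2 (hmono₂ hst.le))]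
    congr 1
    show (m t - m s) + (m₂ t - m₂ s) = (2*k+1) * (t - s)
    simp only [hm, hm₂]; ring
  have hac : S.measure ≪ volume := by
    intro s hs
    have h1 : S.measure s ≤ (S.measure + S₂.measure) s := Measure.le_iff'.1 (Measure.le_add_right le_rfl) s
    rw [hkey] at h1
    simp [hs] at h1
    exact h1
  set d : ℝ → ENNReal := S.measure.rnDeriv volume with hd
  have hwd : volume.withDensity d = S.measure := Measure.withDensity_rnDeriv_eq _ _ hac
  have hder := S.ae_hasDerivAt
  have hfin : ∀ᵐ x, d x < ⊤ := Measure.rnDeriv_lt_top _ _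
  have hgd : ∀ᵐ y, deriv g y = (d y).toReal - (k + 1) := by
    filter_upwards [hder] with y hy
    have : HasDerivAt g ((d y).toReal - (k+1)) y := by
      have h2 : HasDerivAt (fun x : ℝ => (k+1) * x) (k+1) y := by
        simpa using (hasDerivAt_id y).const_mul (k+1)
      have h3 := hy.sub h2
      have hgm : g = fun y => m y - (k+1)*y := by funext z; simp only [hm]; ring
      rw [hgm]
      exact h3
    exact this.deriv
  have hdint : IntegrableOn (fun y => (d y).toReal) (Ioc a b) := by
    apply integrable_toReal_of_lintegral_ne_top (Measure.measurable_rnDeriv _ _).aemeasurable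
    rw [← withDensity_apply d measurableSet_Ioc, hwd, StieltjesFunction.measure_Ioc]
    exact ENNReal.ofReal_ne_top
  have hmint : ∫ y in a..b, (d y).toReal = m b - m a := by
    rw [integral_of_le hab, integral_toReal (Measure.measurable_rnDeriv _ _).aemeasurable
      (ae_restrict_of_ae hfin), ← withDensity_apply d measurableSet_Ioc, hwd,
      StieltjesFunction.measure_Ioc, ENNReal.toReal_ofReal (sub_nonneg.2 (hmono hab))]
  calc ∫ y in a..b, deriv g y = ∫ y in a..b, ((d y).toReal - (k+1)) := by
        apply intervalIntegral.integral_congr_ae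
        filter_upwards [hgd] with y hy _
        exact hy
    _ = (∫ y in a..b, (d y).toReal) - ∫ y in a..b, ((k:ℝ)+1) := by
        apply intervalIntegral.integral_sub
        · rw [intervalIntegrable_iff_integrableOn_Ioc_of_le hab]; exact hdint
        · exact intervalIntegrable_const
    _ = (m b - m a) - (k+1) * (b - a) := by
        rw [hmint, intervalIntegral.integral_const, smul_eq_mul]; ring
    _ = g b - g a := by simp only [hm]; ring

theorem periodic_bound_one {T : ℝ} (hT : 0 < T) {f : ℝ → ℝ} (hc : Continuous f)
    (hp : Function.Periodic f T) : ∃ R : ℝ, ∀ x, |f x| ≤ R := by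
  obtain ⟨R, hR⟩ := isCompact_Icc.exists_bound_of_continuousOn (hc.continuousOn (s := Icc 0 T))
  refine ⟨R, fun x => ?_⟩
  obtain ⟨y, hy, hxy⟩ := hp.exists_mem_Ico₀ hT x
  rw [hxy]
  exact hR y (Ico_subset_Icc_self hy)

theorem periodic_bound_two {T : ℝ} (hT : 0 < T) {f : ℝ → ℝ → ℝ}
    (hc : Continuous fun p : ℝ × ℝ => f p.1 p.2)
    (hx : ∀ x y, f (x + T) y = f x y) (hy : ∀ x y, f x (y + T) = f x y) :
    ∃ R : ℝ, ∀ x y, |f x y| ≤ R := by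
  obtain ⟨R, hR⟩ := (isCompact_Icc.prod isCompact_Icc).exists_bound_of_continuousOn
    (hc.continuousOn (s := Icc (0:ℝ) T ×ˢ Icc (0:ℝ) T))
  refine ⟨R, fun x y => ?_⟩
  obtain ⟨x', hx', hxx⟩ := (Function.Periodic.exists_mem_Ico₀ (f := fun z => f z y) (fun z => hx z y) hT) x
  obtain ⟨y', hy', hyy⟩ := (Function.Periodic.exists_mem_Ico₀ (f := fun z => f x' z) (fun z => hy x' z) hT) y
  have : f x y = f x' y' := by rw [hxx, hyy]
  rw [this]
  exact hR (x', y') (mem_prod.2 ⟨Ico_subset_Icc_self hx', Ico_subset_Icc_self hy'⟩)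

theorem primitive_hasFDerivAt {f0 : ℝ → ℝ → ℝ}
    (hf0 : ContDiff ℝ 1 (fun p : ℝ × ℝ => f0 p.1 p.2)) {Cf : ℝ}
    (hbd : ∀ q : ℝ × ℝ, ‖fderiv ℝ (fun p : ℝ × ℝ => f0 p.1 p.2) q‖ ≤ Cf) (p : ℝ × ℝ) :
    ∃ L : ℝ × ℝ →L[ℝ] ℝ,
      HasFDerivAt (fun q : ℝ × ℝ => ∫ s in (0:ℝ)..q.1, f0 s q.2) L p ∧
      L (1, 0) = f0 p.1 p.2 ∧
      L (0, 1) = ∫ s in (0:ℝ)..p.1, deriv (fun y' => f0 s y') p.2 := by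
  set f0u : ℝ × ℝ → ℝ := fun q => f0 q.1 q.2 with hf0u
  have hdf : Differentiable ℝ f0u := hf0.differentiable one_ne_zero
  have hcont : Continuous f0u := hf0.continuous
  have hfd : Continuous (fderiv ℝ f0u) := hf0.continuous_fderiv one_ne_zero
  have hCf0 : 0 ≤ Cf := le_trans (norm_nonneg _) (hbd p)
  set e1 : ℝ × ℝ →L[ℝ] ℝ := ContinuousLinearMap.fst ℝ ℝ ℝ with he1
  set e2 : ℝ × ℝ →L[ℝ] ℝ := ContinuousLinearMap.snd ℝ ℝ ℝ with he2
  set Bm : ℝ × ℝ →L[ℝ] ℝ × ℝ := e1.prod 0 with hBm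
  set Am : ℝ × ℝ →L[ℝ] ℝ × ℝ := (0 : ℝ × ℝ →L[ℝ] ℝ).prod e2 with hAm
  have hAmv : ∀ v : ℝ × ℝ, Am v = (0, v.2) := fun v => rfl
  have hBmv : ∀ v : ℝ × ℝ, Bm v = (v.1, 0) := fun v => rfl
  have hAn : ‖Am‖ ≤ 1 := by
    apply ContinuousLinearMap.opNorm_le_bound _ zero_le_one
    intro v
    rw [hAmv, one_mul]
    calc ‖((0:ℝ), v.2)‖ = ‖v.2‖ := by simp [Prod.norm_def]
      _ ≤ ‖v‖ := norm_snd_le v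
  have hBn : ‖Bm‖ ≤ 1 := by
    apply ContinuousLinearMap.opNorm_le_bound _ zero_le_one
    intro v
    rw [hBmv, one_mul]
    calc ‖(v.1, (0:ℝ))‖ = ‖v.1‖ := by simp [Prod.norm_def]
      _ ≤ ‖v‖ := norm_fst_le v
  set Mt : ℝ → (ℝ × ℝ →L[ℝ] ℝ × ℝ) := fun t => Am + t • Bm with hMt
  have hMtv : ∀ t (v : ℝ × ℝ), Mt t v = (t * v.1, v.2) := by
    intro t v
    simp [hMt, hAmv, hBmv, Prod.ext_iff]
  have hMtn : ∀ t, |t| ≤ 1 → ‖Mt t‖ ≤ 2 := by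
    intro t ht
    calc ‖Mt t‖ ≤ ‖Am‖ + ‖t • Bm‖ := norm_add_le _ _
      _ ≤ 1 + |t| * 1 := by
          refine add_le_add hAn ?_
          refine le_trans (norm_smul_le t Bm) ?_
          rw [Real.norm_eq_abs]
          exact mul_le_mul (le_refl _) hBn (norm_nonneg _) (abs_nonneg t)
      _ ≤ 2 := by linarith
  set F : (ℝ × ℝ) → ℝ → ℝ := fun q t => f0 (t * q.1) q.2 with hF
  set F' : (ℝ × ℝ) → ℝ → (ℝ × ℝ →L[ℝ] ℝ) := fun q t => (fderiv ℝ f0u (t * q.1, q.2)).comp (Mt t) with hF'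
  have hFq : ∀ t (q : ℝ × ℝ), HasFDerivAt (fun q' => F q' t) (F' q t) q := by
    intro t q
    have hι : HasFDerivAt (fun q' : ℝ × ℝ => (t * q'.1, q'.2)) (Mt t) q := by
      have : (fun q' : ℝ × ℝ => (t * q'.1, q'.2)) = fun q' => Mt t q' := by
        funext q'; rw [hMtv]
      rw [this]
      exact (Mt t).hasFDerivAt
    exact ((hdf _).hasFDerivAt.comp q hι)
  have hFmeas : ∀ q : ℝ × ℝ, Continuous (fun t => F q t) := by
    intro q
    exact hcont.comp ((continuous_id.mul continuous_const).prodMk continuous_const)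
  have hAu : ∀ q : ℝ × ℝ, HasFDerivAt (fun q' => ∫ t in (0:ℝ)..1, F q' t)
      (∫ t in (0:ℝ)..1, F' q t) q := by
    intro q
    refine (intervalIntegral.hasFDerivAt_integral_of_dominated_of_fderiv_le
      (F := F) (F' := F') (bound := fun _ => Cf * 2) (Metric.ball_mem_nhds _ zero_lt_one) ?_ ?_ ?_ ?_ ?_ ?_)
    · filter_upwards with q'
      exact (hFmeas q').aestronglyMeasurable
    · exact (hFmeas q).intervalIntegrable 0 1
    · have hc1 : Continuous fun t : ℝ => fderiv ℝ f0u (t * q.1, q.2) :=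
        hfd.comp ((continuous_id.mul continuous_const).prodMk continuous_const)
      have hc2 : Continuous fun t : ℝ => Mt t :=
        continuous_const.add (continuous_id.smul continuous_const)
      have : Continuous (fun t => F' q t) :=
        ((ContinuousLinearMap.compL ℝ (ℝ×ℝ) (ℝ×ℝ) ℝ).continuous₂.comp (hc1.prodMk hc2) : _)
      exact this.aestronglyMeasurable
    · filter_upwards with t ht q' _
      have ht1 : |t| ≤ 1 := by
        have h01 : t ∈ Set.Ioc (0:ℝ) 1 := by
          simpa [Set.uIoc_of_le (zero_le_one (α := ℝ))] using ht
        rw [abs_le]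
        exact ⟨by linarith [h01.1], h01.2⟩
      calc ‖F' q' t‖ ≤ ‖fderiv ℝ f0u (t * q'.1, q'.2)‖ * ‖Mt t‖ :=
            ContinuousLinearMap.opNorm_comp_le _ _
        _ ≤ Cf * 2 := mul_le_mul (hbd _) (hMtn t ht1) (norm_nonneg _) hCf0
    · exact intervalIntegrable_const
    · filter_upwards with t _ q' _
      exact hFq t q'
  have hFA : (fun q : ℝ × ℝ => ∫ s in (0:ℝ)..q.1, f0 s q.2)
      = fun q => q.1 * ∫ t in (0:ℝ)..1, F q t := by
    funext q
    by_cases hq : q.1 = 0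
    · simp [hq, intervalIntegral.integral_same]
    · have := intervalIntegral.integral_comp_mul_left (a := (0:ℝ)) (b := 1)
        (fun s => f0 s q.2) hq
      have h2 : ∫ t in (0:ℝ)..1, F q t = (q.1)⁻¹ • ∫ s in (0:ℝ)..q.1, f0 s q.2 := by
        have h3 : (∫ t in (0:ℝ)..1, F q t)
            = ∫ t in (0:ℝ)..1, (fun s => f0 s q.2) (q.1 * t) := by
          apply intervalIntegral.integral_congr
          intro t _
          simp only [hF, mul_comm]
        rw [h3, this]
        norm_num
      rw [h2, smul_eq_mul, ← mul_assoc, mul_inv_cancel₀ hq, one_mul]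
  set L : ℝ × ℝ →L[ℝ] ℝ :=
    (∫ t in (0:ℝ)..1, F p t) • e1 + p.1 • (∫ t in (0:ℝ)..1, F' p t) with hL
  have hFuL : HasFDerivAt (fun q : ℝ × ℝ => ∫ s in (0:ℝ)..q.1, f0 s q.2) L p := by
    rw [hFA]
    have h1 : HasFDerivAt (fun q : ℝ × ℝ => q.1) e1 p := e1.hasFDerivAt
    have h2 := hAu p
    have := h1.mul h2
    refine this.congr_fderiv ?_
    rw [hL]
    abel
  refine ⟨L, hFuL, ?_, ?_⟩
  · have hc1 : HasDerivAt (fun x : ℝ => (x, p.2)) ((1:ℝ), (0:ℝ)) p.1 :=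
      (hasDerivAt_id p.1).prodMk (hasDerivAt_const p.1 p.2)
    have hcomp : HasDerivAt (fun x : ℝ => ∫ s in (0:ℝ)..x, f0 s p.2) (L (1, 0)) p.1 := by
      have := hFuL.comp_hasDerivAt p.1 hc1
      exact this
    have hftc : HasDerivAt (fun x : ℝ => ∫ s in (0:ℝ)..x, f0 s p.2) (f0 p.1 p.2) p.1 := by
      have hcx : Continuous (fun s => f0 s p.2) :=
        hcont.comp (continuous_id.prodMk continuous_const)
      exact intervalIntegral.integral_hasDerivAt_right (hcx.intervalIntegrable 0 p.1)
        (hcx.stronglyMeasurableAtFilter volume (nhds p.1)) hcx.continuousAt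
    exact hcomp.unique hftc
  · have hc2 : HasDerivAt (fun w : ℝ => (p.1, w)) ((0:ℝ), (1:ℝ)) p.2 :=
      (hasDerivAt_const p.2 p.1).prodMk (hasDerivAt_id p.2)
    have hcomp : HasDerivAt (fun w : ℝ => ∫ s in (0:ℝ)..p.1, f0 s w) (L (0, 1)) p.2 := by
      have := hFuL.comp_hasDerivAt p.2 hc2
      exact this
    have hD2 : ∀ x y : ℝ, HasDerivAt (fun y' => f0 x y') ((fderiv ℝ f0u (x, y)) (0, 1)) y := by
      intro x y
      have hcy : HasDerivAt (fun y' : ℝ => (x, y')) ((0:ℝ), (1:ℝ)) y :=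
        (hasDerivAt_const y x).prodMk (hasDerivAt_id y)
      exact (hdf (x, y)).hasFDerivAt.comp_hasDerivAt y hcy
    have hD2eq : ∀ x y : ℝ, deriv (fun y' => f0 x y') y = (fderiv ℝ f0u (x, y)) (0, 1) :=
      fun x y => (hD2 x y).deriv
    have hD2cont : Continuous (fun q : ℝ × ℝ => (fderiv ℝ f0u q) ((0:ℝ), (1:ℝ))) :=
      hfd.clm_apply continuous_const
    have hpar : HasDerivAt (fun w : ℝ => ∫ s in (0:ℝ)..p.1, f0 s w)
        (∫ s in (0:ℝ)..p.1, (fderiv ℝ f0u (s, p.2)) (0, 1)) p.2 := by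
      refine (intervalIntegral.hasDerivAt_integral_of_dominated_loc_of_deriv_le
        (F := fun w s => f0 s w) (F' := fun w s => (fderiv ℝ f0u (s, w)) (0, 1))
        (bound := fun _ => Cf) (Metric.ball_mem_nhds _ zero_lt_one) ?_ ?_ ?_ ?_ ?_ ?_).2
      · filter_upwards with w
        exact (hcont.comp (continuous_id.prodMk continuous_const :
          Continuous fun s : ℝ => (s, w))).aestronglyMeasurable
      · exact (hcont.comp (continuous_id.prodMk continuous_const :
          Continuous fun s : ℝ => (s, p.2))).intervalIntegrable 0 p.1
      · exact ((hD2cont.comp (continuous_id.prodMk continuous_const :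
          Continuous fun s : ℝ => (s, p.2)))).aestronglyMeasurable
      · filter_upwards with s _ w _
        calc ‖(fderiv ℝ f0u (s, w)) ((0:ℝ), (1:ℝ))‖
            ≤ ‖fderiv ℝ f0u (s, w)‖ * ‖((0:ℝ), (1:ℝ))‖ := ContinuousLinearMap.le_opNorm _ _
          _ ≤ Cf * 1 := by
              refine mul_le_mul (hbd _) ?_ (norm_nonneg _) hCf0
              simp [Prod.norm_def]
          _ = Cf := mul_one Cf
      · exact intervalIntegrable_const
      · filter_upwards with s _ w _
        exact hD2 s w
    have := hcomp.unique hpar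
    rw [this]
    apply intervalIntegral.integral_congr
    intro s _
    exact (hD2eq s p.2).symm

theorem exists_lipschitzOnWith_mul {f h : ℝ → ℝ} {s : Set ℝ} {Kf Kh : NNReal} {Bf Bh : ℝ}
    (hBf0 : 0 ≤ Bf) (hBh0 : 0 ≤ Bh)
    (hf : LipschitzOnWith Kf f s) (hh : LipschitzOnWith Kh h s)
    (hBf : ∀ y ∈ s, |f y| ≤ Bf) (hBh : ∀ y ∈ s, |h y| ≤ Bh) :
    ∃ Kp : NNReal, LipschitzOnWith Kp (fun y => f y * h y) s := by
  refine ⟨Real.toNNReal (Bf * Kh + Bh * Kf), ?_⟩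
  rw [lipschitzOnWith_iff_dist_le_mul] at hf hh ⊢
  intro x hx y hy
  have h1 := hf x hx y hy
  have h2 := hh x hx y hy
  rw [Real.dist_eq] at h1 h2 ⊢
  have hsplit : f x * h x - f y * h y = f x * (h x - h y) + h y * (f x - f y) := by ring
  rw [hsplit]
  have hcoe : (Bf * Kh + Bh * Kf) ≤ ((Real.toNNReal (Bf * Kh + Bh * Kf) : NNReal) : ℝ) :=
    Real.le_coe_toNNReal _
  calc |f x * (h x - h y) + h y * (f x - f y)|
      ≤ |f x| * |h x - h y| + |h y| * |f x - f y| := by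
        refine le_trans (abs_add_le _ _) ?_
        rw [abs_mul, abs_mul]
    _ ≤ Bf * (Kh * |x - y|) + Bh * (Kf * |x - y|) := by
        refine add_le_add ?_ ?_
        · exact mul_le_mul (hBf x hx) h2 (abs_nonneg _) hBf0
        · exact mul_le_mul (hBh y hy) h1 (abs_nonneg _) hBh0
    _ = (Bf * Kh + Bh * Kf) * |x - y| := by ring
    _ ≤ ((Real.toNNReal (Bf * Kh + Bh * Kf) : NNReal) : ℝ) * |x - y| :=
        mul_le_mul_of_nonneg_right hcoe (abs_nonneg _)

/-- **Mixing estimate on a single good interval (deterministic form of Lemma 4.1).**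
The flow map is `Φ(x,y) = (x + β - φ(y), y + a)`; since `f0` is `2π`-periodic in both
variables the reduction modulo `2π` is implicit.  `J` is an interval of length at
most `2π` on which `|φ'| ≥ Λ ≥ 1` and the total variation of `1/φ'` is at most `M`. -/
theorem mixing_single_good_interval :
    ∃ C > 0, ∀ φ : ℝ → ℝ, ContDiff ℝ 2 φ → Function.Periodic φ (2 * Real.pi) →
      ∀ β a : ℝ, ∀ J : Set ℝ,
      (∃ u v : ℝ, u ≤ v ∧ v - u ≤ 2 * Real.pi ∧ Set.Ioo u v ⊆ J ∧ J ⊆ Set.Icc u v) →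
      ∀ Λ M : ℝ, 1 ≤ Λ →
      (∀ y ∈ J, Λ ≤ |deriv φ y|) →
      (∫ y in J, |deriv (fun y' : ℝ => (deriv φ y')⁻¹) y|) ≤ M →
      ∀ f0 : ℝ → ℝ → ℝ, ContDiff ℝ 1 (fun p : ℝ × ℝ => f0 p.1 p.2) →
      (∀ x y : ℝ, f0 (x + 2 * Real.pi) y = f0 x y ∧ f0 x (y + 2 * Real.pi) = f0 x y) →
      (∀ y : ℝ, (∫ x in (0:ℝ)..(2 * Real.pi), f0 x y) = 0) →
      ∀ g : ℝ → ℝ, (∃ K : NNReal, LipschitzWith K g) →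
        Function.Periodic g (2 * Real.pi) →
      ∀ x : ℝ,
        |∫ y in J, f0 (x + β - φ y) (y + a) * g y|
          ≤ C * (Λ⁻¹ + M)
              * ((⨆ p : ℝ × ℝ, |f0 p.1 p.2|)
                  + (⨆ p : ℝ × ℝ, |deriv (fun y' => f0 p.1 y') p.2|))
              * ((⨆ y : ℝ, |g y|) + essSup (fun y => |deriv g y|) volume) := by
  refine ⟨200, by norm_num, ?_⟩
  intro φ hφ hφper β a J hJex Λ M hΛ hJΛ hJM f0 hf0 hf0per hf0mean g hgex hgper x
  obtain ⟨u, v, huv, hlen, hJ1, hJ2⟩ := hJex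
  obtain ⟨K, hgK⟩ := hgex
  set T : ℝ := 2 * Real.pi with hTdef
  have hT0 : 0 < T := by rw [hTdef]; positivity
  have hT7 : T ≤ 7 := by
    rw [hTdef]
    nlinarith [Real.pi_lt_d2]
  set c : ℝ := x + β with hcdef
  set f0u : ℝ × ℝ → ℝ := fun q => f0 q.1 q.2 with hf0udef
  have hcont : Continuous f0u := hf0.continuous
  have hdf : Differentiable ℝ f0u := hf0.differentiable one_ne_zero
  have hfd : Continuous (fderiv ℝ f0u) := hf0.continuous_fderiv one_ne_zero
  set D2 : ℝ → ℝ → ℝ := fun x' y' => deriv (fun y'' => f0 x' y'') y' with hD2def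
  have hD2has : ∀ x' y' : ℝ, HasDerivAt (fun y'' => f0 x' y'') ((fderiv ℝ f0u (x', y')) (0, 1)) y' := by
    intro x' y'
    have hcy : HasDerivAt (fun y'' : ℝ => (x', y'')) ((0:ℝ), (1:ℝ)) y' :=
      (hasDerivAt_const y' x').prodMk (hasDerivAt_id y')
    exact (hdf (x', y')).hasFDerivAt.comp_hasDerivAt y' hcy
  have hD2eq : ∀ x' y' : ℝ, D2 x' y' = (fderiv ℝ f0u (x', y')) (0, 1) :=
    fun x' y' => (hD2has x' y').deriv
  have hD2cont : Continuous fun q : ℝ × ℝ => D2 q.1 q.2 := by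
    have h2 : Continuous (fun q : ℝ × ℝ => (fderiv ℝ f0u q) ((0:ℝ), (1:ℝ))) :=
      hfd.clm_apply continuous_const
    refine h2.congr fun q => ?_
    exact (hD2eq q.1 q.2).symm
  have hperiodic_fderiv : ∀ (cc : ℝ × ℝ), (∀ q : ℝ × ℝ, f0u (q + cc) = f0u q) →
      ∀ q : ℝ × ℝ, fderiv ℝ f0u (q + cc) = fderiv ℝ f0u q := by
    intro cc hcc q
    have hτ : HasFDerivAt (fun q' : ℝ × ℝ => q' + cc) (ContinuousLinearMap.id ℝ (ℝ × ℝ)) q :=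
      (hasFDerivAt_id q).add_const cc
    have hcomp : HasFDerivAt (fun q' => f0u (q' + cc))
        ((fderiv ℝ f0u (q + cc)).comp (ContinuousLinearMap.id ℝ (ℝ × ℝ))) q :=
      by have := (hdf (q + cc)).hasFDerivAt.comp q hτ; exact this
    have heq : (fun q' : ℝ × ℝ => f0u (q' + cc)) = f0u := funext hcc
    rw [heq, ContinuousLinearMap.comp_id] at hcomp
    exact ((hdf q).hasFDerivAt.unique hcomp).symm
  have hfdper1 : ∀ q : ℝ × ℝ, fderiv ℝ f0u (q + ((T:ℝ), (0:ℝ))) = fderiv ℝ f0u q :=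
    hperiodic_fderiv ((T:ℝ), (0:ℝ)) (fun q => by
      show f0 (q.1 + T) (q.2 + 0) = f0 q.1 q.2
      rw [add_zero]; exact (hf0per q.1 q.2).1)
  have hfdper2 : ∀ q : ℝ × ℝ, fderiv ℝ f0u (q + ((0:ℝ), (T:ℝ))) = fderiv ℝ f0u q :=
    hperiodic_fderiv ((0:ℝ), (T:ℝ)) (fun q => by
      show f0 (q.1 + 0) (q.2 + T) = f0 q.1 q.2
      rw [add_zero]; exact (hf0per q.1 q.2).2)
  obtain ⟨Cf, hCf⟩ : ∃ Cf : ℝ, ∀ q : ℝ × ℝ, ‖fderiv ℝ f0u q‖ ≤ Cf := by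
    obtain ⟨R, hR⟩ := periodic_bound_two hT0 (f := fun x' y' => ‖fderiv ℝ f0u (x', y')‖)
      (hfd.norm.comp (continuous_fst.prodMk continuous_snd))
      (fun x' y' => by simpa using congrArg norm (hfdper1 (x', y')))
      (fun x' y' => by simpa using congrArg norm (hfdper2 (x', y')))
    exact ⟨R, fun q => le_trans (le_abs_self _) (by simpa using hR q.1 q.2)⟩
  set A : ℝ := ⨆ p : ℝ × ℝ, |f0 p.1 p.2| with hAdef
  set Bc : ℝ := ⨆ p : ℝ × ℝ, |deriv (fun y' => f0 p.1 y') p.2| with hBcdef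
  set Cg : ℝ := ⨆ y : ℝ, |g y| with hCgdef
  set Dg : ℝ := essSup (fun y => |deriv g y|) volume with hDgdef
  have hA : ∀ x' y', |f0 x' y'| ≤ A := by
    obtain ⟨R, hR⟩ := periodic_bound_two hT0 (f := f0) hcont
      (fun x' y' => (hf0per x' y').1) (fun x' y' => (hf0per x' y').2)
    intro x' y'
    exact le_ciSup (f := fun p : ℝ × ℝ => |f0 p.1 p.2|)
      ⟨R, by rintro _ ⟨p, rfl⟩; exact hR p.1 p.2⟩ (x', y')
  have hA0 : 0 ≤ A := le_trans (abs_nonneg _) (hA 0 0)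
  have hD2per1 : ∀ x' y', D2 (x' + T) y' = D2 x' y' := by
    intro x' y'
    have h3 : (fun y'' => f0 (x' + T) y'') = fun y'' => f0 x' y'' :=
      funext fun y'' => (hf0per x' y'').1
    simp only [hD2def]
    rw [h3]
  have hD2per2 : ∀ x' y', D2 x' (y' + T) = D2 x' y' := by
    intro x' y'
    have hshift : (fun z => f0 x' (z + T)) = fun z => f0 x' z :=
      funext fun z => (hf0per x' z).2
    have h4 := deriv_comp_add_const (f := fun y'' => f0 x' y'') (a := T) (x := y')
    simp only [hD2def]
    rw [← h4, hshift]
  have hBc : ∀ x' y', |D2 x' y'| ≤ Bc := by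
    obtain ⟨R, hR⟩ := periodic_bound_two hT0 (f := D2) hD2cont hD2per1 hD2per2
    intro x' y'
    exact le_ciSup (f := fun p : ℝ × ℝ => |deriv (fun y' => f0 p.1 y') p.2|)
      ⟨R, by rintro _ ⟨p, rfl⟩; exact hR p.1 p.2⟩ (x', y')
  have hB0 : 0 ≤ Bc := le_trans (abs_nonneg _) (hBc 0 0)
  have hCg : ∀ y', |g y'| ≤ Cg := by
    obtain ⟨R, hR⟩ := periodic_bound_one hT0 hgK.continuous hgper
    intro y'
    exact le_ciSup (f := fun y => |g y|) ⟨R, by rintro _ ⟨y, rfl⟩; exact hR y⟩ y'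
  have hCg0 : 0 ≤ Cg := le_trans (abs_nonneg _) (hCg 0)
  have hKd : ∀ y, |deriv g y| ≤ K := by
    intro y
    rw [← Real.norm_eq_abs, ← fderiv_apply_one_eq_deriv]
    calc ‖(fderiv ℝ g y) 1‖ ≤ ‖fderiv ℝ g y‖ * ‖(1:ℝ)‖ := ContinuousLinearMap.le_opNorm _ _
      _ ≤ K * 1 := by
          refine mul_le_mul (norm_fderiv_le_of_lipschitz ℝ hgK) (by norm_num)
            (norm_nonneg _) K.coe_nonneg
      _ = K := mul_one _
  have hbdd_ae : IsBoundedUnder (· ≤ ·) (ae volume) (fun y => |deriv g y|) :=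
    Filter.isBoundedUnder_of ⟨(K:ℝ), hKd⟩
  have hDgae : ∀ᵐ y, |deriv g y| ≤ Dg := ae_le_essSup hbdd_ae
  have hDg0 : 0 ≤ Dg := by
    refine Filter.le_limsup_of_frequently_le ?_ hbdd_ae
    exact Eventually.frequently (Eventually.of_forall fun y => abs_nonneg _)
  have hΛ0 : (0:ℝ) < Λ := lt_of_lt_of_le one_pos hΛ
  have hΛi0 : (0:ℝ) ≤ Λ⁻¹ := by positivity
  have hM0 : 0 ≤ M := le_trans (integral_nonneg fun y => abs_nonneg _) hJM
  set P3 : ℝ := (Λ⁻¹ + M) * (A + Bc) * (Cg + Dg) with hP3def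
  have hP30 : 0 ≤ P3 := by
    rw [hP3def]
    have h1 : 0 ≤ Λ⁻¹ + M := by linarith
    have h2 : 0 ≤ A + Bc := by linarith
    have h3 : 0 ≤ Cg + Dg := by linarith
    positivity
  have hgoal_eq : 200 * (Λ⁻¹ + M) * (A + Bc) * (Cg + Dg) = 200 * P3 := by
    rw [hP3def]; ring
  rcases eq_or_lt_of_le huv with rfl | hulv
  · have hJ0 : volume J = 0 := by
      have h1 : J ⊆ ({u} : Set ℝ) := by rw [← Icc_self u]; exact hJ2
      exact measure_mono_null h1 Real.volume_singleton
    rw [Measure.restrict_eq_zero.mpr hJ0, integral_zero_measure, abs_zero, hgoal_eq]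
    linarith
  have hIccΛ : ∀ y ∈ Icc u v, Λ ≤ |deriv φ y| := by
    have hφ'c0 : Continuous (deriv φ) := hφ.continuous_deriv (by norm_num)
    have hclosed : IsClosed {y : ℝ | Λ ≤ |deriv φ y|} :=
      isClosed_le continuous_const (hφ'c0.abs)
    have hsub : Ioo u v ⊆ {y : ℝ | Λ ≤ |deriv φ y|} := fun y hy => hJΛ y (hJ1 hy)
    intro y hy
    have hss : Icc u v ⊆ {y : ℝ | Λ ≤ |deriv φ y|} := by
      rw [← closure_Ioo hulv.ne]
      exact closure_minimal hsub hclosed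
    exact hss hy
  have hφ1 : ContDiff ℝ ((1:ℕ∞) + 1) φ := by exact_mod_cast hφ
  have hφ'cd : ContDiff ℝ 1 (deriv φ) := (contDiff_succ_iff_deriv.mp hφ1).2.2
  have hφ'c : Continuous (deriv φ) := hφ'cd.continuous
  have hφ'd : Differentiable ℝ (deriv φ) := hφ'cd.differentiable one_ne_zero
  have hφ''c : Continuous (deriv (deriv φ)) := hφ'cd.continuous_deriv le_rfl
  have hφdiff : Differentiable ℝ φ := hφ.differentiable (by norm_num)
  have hne : ∀ y ∈ Icc u v, deriv φ y ≠ 0 := by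
    intro y hy h0
    have h5 := hIccΛ y hy
    rw [h0, abs_zero] at h5
    linarith
  set ψ : ℝ → ℝ := fun y => (deriv φ y)⁻¹ with hψdef
  have hψb : ∀ y ∈ Icc u v, |ψ y| ≤ Λ⁻¹ := by
    intro y hy
    rw [hψdef, abs_inv]
    exact inv_anti₀ hΛ0 (hIccΛ y hy)
  have hψdiff : ∀ y ∈ Icc u v, DifferentiableAt ℝ ψ y :=
    fun y hy => (hφ'd y).inv (hne y hy)
  have hψcont : ContinuousOn ψ (Icc u v) :=
    ContinuousOn.inv₀ hφ'c.continuousOn hne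
  have hψ'eq : ∀ y ∈ Icc u v, deriv ψ y = -deriv (deriv φ) y / (deriv φ y) ^ 2 :=
    fun y hy => deriv_inv'' (hφ'd y) (hne y hy)
  have hψ'cont : ContinuousOn (deriv ψ) (Icc u v) := by
    refine ContinuousOn.congr (f := fun y => -deriv (deriv φ) y / (deriv φ y) ^ 2) ?_ hψ'eq
    exact (hφ''c.neg.continuousOn).div (hφ'c.pow 2).continuousOn
      (fun y hy => pow_ne_zero 2 (hne y hy))
  set Fu : ℝ × ℝ → ℝ := fun q => ∫ s in (0:ℝ)..q.1, f0 s q.2 with hFudef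
  set Hu : ℝ × ℝ → ℝ := fun q => ∫ s in (0:ℝ)..q.1, D2 s q.2 with hHudef
  set γ : ℝ → ℝ × ℝ := fun y => (c - φ y, y + a) with hγdef
  set G : ℝ → ℝ := fun y => Fu (γ y) with hGdef
  have hγcont : Continuous γ :=
    (continuous_const.sub hφdiff.continuous).prodMk (continuous_id.add continuous_const)
  have hγd : ∀ y, HasDerivAt γ ((-deriv φ y, 1) : ℝ × ℝ) y := by
    intro y
    exact (((hφdiff y).hasDerivAt.const_sub c)).prodMk ((hasDerivAt_id y).add_const a)
  have hG : ∀ y, HasDerivAt G (-(deriv φ y) * f0 (c - φ y) (y + a) + Hu (γ y)) y := by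
    intro y
    obtain ⟨L, hL, hL1, hL2⟩ := primitive_hasFDerivAt hf0 hCf (γ y)
    have h := hL.comp_hasDerivAt y (hγd y)
    have hexp : L (-deriv φ y, 1) = -(deriv φ y) * f0 (c - φ y) (y + a) + Hu (γ y) := by
      have hsum : ((-deriv φ y, 1) : ℝ × ℝ)
          = (-(deriv φ y)) • ((1:ℝ), (0:ℝ)) + ((0:ℝ), (1:ℝ)) := by
        simp [Prod.ext_iff]
      rw [hsum, map_add, L.map_smul, hL1, hL2]
      simp only [smul_eq_mul, hγdef, hHudef, hD2def]
    rw [← hexp]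
    exact h
  have hGdiff : Differentiable ℝ G := fun y => (hG y).differentiableAt
  have hGcont : Continuous G := hGdiff.continuous
  have hderivG : ∀ y, deriv G y = -(deriv φ y) * f0 (c - φ y) (y + a) + Hu (γ y) :=
    fun y => (hG y).deriv
  have hprim_bound : ∀ (h : ℝ → ℝ → ℝ) (Bh : ℝ),
      (Continuous fun q : ℝ × ℝ => h q.1 q.2) → (∀ x' y', |h x' y'| ≤ Bh) →
      (∀ x' y', h (x' + T) y' = h x' y') → (∀ w, (∫ s in (0:ℝ)..T, h s w) = 0) →
      ∀ x' w, |∫ s in (0:ℝ)..x', h s w| ≤ T * Bh := by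
    intro h Bh hhc hhb hhper hhmean x' w
    have hint : ∀ a' b' : ℝ, IntervalIntegrable (fun s => h s w) volume a' b' :=
      fun a' b' => (hhc.comp (continuous_id.prodMk continuous_const)).intervalIntegrable a' b'
    have hper : Function.Periodic (fun x'' => ∫ s in (0:ℝ)..x'', h s w) T := by
      intro z
      have hadd : (∫ s in (0:ℝ)..z, h s w) + (∫ s in z..(z+T), h s w)
          = ∫ s in (0:ℝ)..(z+T), h s w :=
        intervalIntegral.integral_add_adjacent_intervals (hint 0 z) (hint z (z+T))
      have hshift : (∫ s in z..(z+T), h s w) = ∫ s in (0:ℝ)..((0:ℝ)+T), h s w :=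
        (Function.Periodic.intervalIntegral_add_eq (f := fun s => h s w)
          (fun s => hhper s w) z 0)
      have hzz : (∫ s in (0:ℝ)..((0:ℝ)+T), h s w) = 0 := by
        rw [zero_add]; exact hhmean w
      simp only []
      rw [← hadd, hshift, hzz, add_zero]
    obtain ⟨z, hz, hzeq⟩ := hper.exists_mem_Ico₀ hT0 x'
    rw [hzeq]
    have hBh0 : 0 ≤ Bh := le_trans (abs_nonneg _) (hhb 0 0)
    calc |∫ s in (0:ℝ)..z, h s w| ≤ Bh * |z - 0| := by
          have h6 := intervalIntegral.norm_integral_le_of_norm_le_const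
            (f := fun s => h s w) (a := 0) (b := z) (C := Bh) (fun s _ => by
              rw [Real.norm_eq_abs]; exact hhb s w)
          simpa [Real.norm_eq_abs] using h6
      _ ≤ T * Bh := by
          rw [sub_zero, abs_of_nonneg hz.1]
          nlinarith [hz.1, hz.2]
  have hD2meanT : ∀ w, (∫ s in (0:ℝ)..T, D2 s w) = 0 := by
    intro w
    have hZ : HasDerivAt (fun w' => ∫ s in (0:ℝ)..T, f0 s w') (∫ s in (0:ℝ)..T, D2 s w) w := by
      refine (intervalIntegral.hasDerivAt_integral_of_dominated_loc_of_deriv_le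
        (F := fun w' s => f0 s w') (F' := fun w' s => D2 s w') (bound := fun _ => Bc)
        (Metric.ball_mem_nhds _ zero_lt_one) ?_ ?_ ?_ ?_ ?_ ?_).2
      · filter_upwards with w'
        exact (hcont.comp (continuous_id.prodMk continuous_const :
          Continuous fun s : ℝ => (s, w'))).aestronglyMeasurable
      · exact (hcont.comp (continuous_id.prodMk continuous_const :
          Continuous fun s : ℝ => (s, w))).intervalIntegrable 0 T
      · exact ((hD2cont.comp (continuous_id.prodMk continuous_const :
          Continuous fun s : ℝ => (s, w)))).aestronglyMeasurable
      · filter_upwards with s _ w' _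
        rw [Real.norm_eq_abs]
        exact hBc s w'
      · exact intervalIntegrable_const
      · filter_upwards with s _ w' _
        have h15 := hD2has s w'
        rw [← hD2eq s w'] at h15
        exact h15
    have hZ0 : HasDerivAt (fun w' : ℝ => ∫ s in (0:ℝ)..T, f0 s w') 0 w := by
      have h7 : (fun w' : ℝ => ∫ s in (0:ℝ)..T, f0 s w') = fun _ => (0:ℝ) := funext hf0mean
      rw [h7]; exact hasDerivAt_const w 0
    exact hZ.unique hZ0
  have hGb : ∀ y, |G y| ≤ T * A := by
    intro y
    have h8 := hprim_bound f0 A hcont hA (fun x' y' => (hf0per x' y').1) hf0mean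
      (c - φ y) (y + a)
    simpa only [hGdef, hFudef, hγdef] using h8
  have hHub : ∀ y, |Hu (γ y)| ≤ T * Bc := by
    intro y
    have h9 := hprim_bound D2 Bc hD2cont hBc hD2per1 hD2meanT (c - φ y) (y + a)
    simpa only [hHudef, hγdef] using h9
  have hHucont : Continuous Hu := by
    have hsw : Continuous (Function.uncurry fun (x' : ℝ) (t : ℝ) => D2 t x') :=
      hD2cont.comp (continuous_snd.prodMk continuous_fst)
    have hswap := intervalIntegral.continuous_parametric_primitive_of_continuous
      (μ := volume) (f := fun (x' : ℝ) (t : ℝ) => D2 t x') (a₀ := 0) hsw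
    refine (hswap.comp (continuous_snd.prodMk (continuous_fst : Continuous (Prod.fst : ℝ × ℝ → ℝ)))).congr ?_
    intro q
    rfl
  have hGdcont : Continuous (deriv G) := by
    rw [show deriv G = fun y => -(deriv φ y) * f0 (c - φ y) (y + a) + Hu (γ y)
      from funext hderivG]
    exact ((hφ'c.neg).mul (hcont.comp hγcont)).add (hHucont.comp hγcont)
  obtain ⟨KG, hKG⟩ := isCompact_Icc.exists_bound_of_continuousOn
    (hGdcont.continuousOn (s := Icc u v))
  have hGlip : LipschitzOnWith (Real.toNNReal KG) G (Icc u v) := by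
    refine (convex_Icc u v).lipschitzOnWith_of_nnnorm_hasDerivWithin_le
      (f' := deriv G) (fun y _ => (hGdiff y).hasDerivAt.hasDerivWithinAt) ?_
    intro y hy
    rw [← NNReal.coe_le_coe, coe_nnnorm, Real.coe_toNNReal']
    exact le_trans (hKG y hy) (le_max_left _ _)
  obtain ⟨Kψb, hKψb⟩ := isCompact_Icc.exists_bound_of_continuousOn hψ'cont
  have hψlip : LipschitzOnWith (Real.toNNReal Kψb) ψ (Icc u v) := by
    refine (convex_Icc u v).lipschitzOnWith_of_nnnorm_hasDerivWithin_le
      (f' := deriv ψ) (fun y hy => (hψdiff y hy).hasDerivAt.hasDerivWithinAt) ?_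
    intro y hy
    rw [← NNReal.coe_le_coe, coe_nnnorm, Real.coe_toNNReal']
    exact le_trans (hKψb y hy) (le_max_left _ _)
  have hglip : LipschitzOnWith K g (Icc u v) := hgK.lipschitzOnWith (s := Icc u v)
  obtain ⟨K1, hK1⟩ := exists_lipschitzOnWith_mul hCg0 hΛi0 hglip hψlip
    (fun y _ => hCg y) hψb
  have hTA0 : 0 ≤ T * A := by positivity
  have hgψb : ∀ y ∈ Icc u v, |g y * ψ y| ≤ Cg * Λ⁻¹ := by
    intro y hy
    rw [abs_mul]
    exact mul_le_mul (hCg y) (hψb y hy) (abs_nonneg _) hCg0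
  obtain ⟨KP, hKP⟩ := exists_lipschitzOnWith_mul hTA0 (by positivity : (0:ℝ) ≤ Cg * Λ⁻¹)
    hGlip hK1 (fun y _ => hGb y) hgψb
  set P : ℝ → ℝ := fun y => G y * (g y * ψ y) with hPdef
  obtain ⟨Pt, hPtlip, hPteq⟩ := hKP.extend_real
  have hPft : ∫ y in u..v, deriv Pt y = P v - P u := by
    rw [lipschitz_integral_deriv hPtlip huv]
    rw [← hPteq (right_mem_Icc.2 huv), ← hPteq (left_mem_Icc.2 huv)]
  set W : ℝ → ℝ := fun y => f0 (c - φ y) (y + a) * g y with hWdef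
  set T1 : ℝ → ℝ := fun y => Hu (γ y) * (g y * ψ y) with hT1def
  set T3 : ℝ → ℝ := fun y => G y * (deriv g y * ψ y) with hT3def
  set T4 : ℝ → ℝ := fun y => G y * (g y * deriv ψ y) with hT4def
  have hae : ∀ᵐ y, y ∈ Set.uIoc u v → deriv Pt y = T1 y + T3 y + T4 y - W y := by
    have hvnull : ∀ᵐ (y : ℝ), y ≠ v := by
      have h1 : ∀ᵐ (y : ℝ), y ∉ ({v} : Set ℝ) := by
        rw [ae_iff]
        simpa using Real.volume_singleton (a := v)
      filter_upwards [h1] with y hy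
      simpa using hy
    filter_upwards [hgK.ae_differentiableAt, hvnull] with y hgd hyv hyI
    rw [Set.uIoc_of_le huv] at hyI
    have hyo : y ∈ Ioo u v := ⟨hyI.1, lt_of_le_of_ne hyI.2 hyv⟩
    have hyc : y ∈ Icc u v := Ioo_subset_Icc_self hyo
    have hney := hne y hyc
    have hψd : DifferentiableAt ℝ ψ y := hψdiff y hyc
    have hGd : DifferentiableAt ℝ G y := hGdiff y
    have hPP : deriv Pt y = deriv P y := by
      apply Filter.EventuallyEq.deriv_eq
      filter_upwards [isOpen_Ioo.mem_nhds hyo] with z hz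
      exact (hPteq (Ioo_subset_Icc_self hz)).symm
    rw [hPP]
    have hd1 : deriv P y = deriv G y * (g y * ψ y) + G y * deriv (fun z => g z * ψ z) y :=
      deriv_mul hGd (hgd.mul hψd)
    have hd2 : deriv (fun z => g z * ψ z) y = deriv g y * ψ y + g y * deriv ψ y :=
      deriv_mul hgd hψd
    have hinv : deriv φ y * ψ y = 1 := mul_inv_cancel₀ hney
    rw [hd1, hd2, hderivG y]
    simp only [hT1def, hT3def, hT4def, hWdef]
    linear_combination (-(f0 (c - φ y) (y + a) * g y)) * hinv
  have hIcc_uIcc : uIcc u v = Icc u v := uIcc_of_le huv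
  have hWcont : Continuous W := (hcont.comp hγcont).mul hgK.continuous
  have hWint : IntervalIntegrable W volume u v := hWcont.intervalIntegrable u v
  have hT1int : IntervalIntegrable T1 volume u v := by
    apply ContinuousOn.intervalIntegrable
    rw [hIcc_uIcc]
    exact ((hHucont.comp hγcont).continuousOn.mul (hgK.continuous.continuousOn.mul hψcont))
  have hT4int : IntervalIntegrable T4 volume u v := by
    apply ContinuousOn.intervalIntegrable
    rw [hIcc_uIcc]
    exact (hGcont.continuousOn.mul (hgK.continuous.continuousOn.mul hψ'cont))
  have hmeasψ : Measurable ψ := (measurable_deriv φ).inv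
  have hIocfin : volume (Ioc u v) < ⊤ := by
    rw [Real.volume_Ioc]; exact ENNReal.ofReal_lt_top
  have hT3bd : ∀ y ∈ Ioc u v, |T3 y| ≤ (T * A) * ((K : ℝ) * Λ⁻¹) := by
    intro y hy
    have hyc : y ∈ Icc u v := Ioc_subset_Icc_self hy
    calc |T3 y| = |G y| * (|deriv g y| * |ψ y|) := by
          rw [hT3def]; simp only []; rw [abs_mul, abs_mul]
      _ ≤ (T * A) * ((K : ℝ) * Λ⁻¹) := by
          refine mul_le_mul (hGb y) ?_ (by positivity) hTA0
          exact mul_le_mul (hKd y) (hψb y hyc) (abs_nonneg _) K.coe_nonneg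
  have hT3int : IntervalIntegrable T3 volume u v := by
    rw [intervalIntegrable_iff_integrableOn_Ioc_of_le huv]
    refine Integrable.mono' (g := fun _ => (T * A) * ((K : ℝ) * Λ⁻¹)) ?_ ?_ ?_
    · exact integrableOn_const hIocfin.ne
    · exact ((hGcont.measurable.mul ((measurable_deriv g).mul hmeasψ)).aestronglyMeasurable)
    · filter_upwards [ae_restrict_mem measurableSet_Ioc] with y hy
      rw [Real.norm_eq_abs]
      exact hT3bd y hy
  have hsplit : ∫ y in u..v, W y
      = (∫ y in u..v, T1 y) + (∫ y in u..v, T3 y) + (∫ y in u..v, T4 y) - (P v - P u) := by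
    have hcong : ∫ y in u..v, deriv Pt y = ∫ y in u..v, (T1 y + T3 y + T4 y - W y) :=
      intervalIntegral.integral_congr_ae (by
        filter_upwards [hae] with y h hy
        exact h hy)
    have hsum : ∫ y in u..v, (T1 y + T3 y + T4 y - W y)
        = (∫ y in u..v, T1 y) + (∫ y in u..v, T3 y) + (∫ y in u..v, T4 y)
          - ∫ y in u..v, W y := by
      rw [intervalIntegral.integral_sub ((hT1int.add hT3int).add hT4int) hWint,
        intervalIntegral.integral_add (hT1int.add hT3int) hT4int,
        intervalIntegral.integral_add hT1int hT3int]
    have h10 := hPft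
    rw [hcong, hsum] at h10
    linarith
  have hJae : (J : Set ℝ) =ᵐ[volume] Ioc u v := by
    rw [MeasureTheory.ae_eq_set]
    constructor
    · have hsub : J \ Ioc u v ⊆ ({u} : Set ℝ) := by
        intro y hy
        rw [mem_singleton_iff]
        have h1 := hJ2 hy.1
        by_contra hne
        exact hy.2 ⟨lt_of_le_of_ne h1.1 (Ne.symm hne), h1.2⟩
      exact measure_mono_null hsub Real.volume_singleton
    · have hsub : Ioc u v \ J ⊆ ({v} : Set ℝ) := by
        intro y hy
        rw [mem_singleton_iff]
        by_contra hne
        exact hy.2 (hJ1 ⟨hy.1.1, lt_of_le_of_ne hy.1.2 hne⟩)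
      exact measure_mono_null hsub Real.volume_singleton
  have hintJ : ∫ y in J, W y = ∫ y in u..v, W y := by
    rw [setIntegral_congr_set hJae, integral_of_le huv]
  have hMIoc : ∫ y in Ioc u v, |deriv ψ y| ≤ M := by
    rw [← setIntegral_congr_set hJae]
    exact hJM
  have hPb : ∀ y ∈ Icc u v, |P y| ≤ (T * A) * (Cg * Λ⁻¹) := by
    intro y hy
    calc |P y| = |G y| * |g y * ψ y| := by rw [hPdef]; simp only []; rw [abs_mul]
      _ ≤ (T * A) * (Cg * Λ⁻¹) := mul_le_mul (hGb y) (hgψb y hy) (abs_nonneg _) hTA0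
  have hb1 : |∫ y in u..v, T1 y| ≤ ((T * Bc) * (Cg * Λ⁻¹)) * T := by
    have h11 := intervalIntegral.norm_integral_le_of_norm_le_const
      (C := (T * Bc) * (Cg * Λ⁻¹)) (f := T1) (a := u) (b := v) (fun y hy => by
        rw [Set.uIoc_of_le huv] at hy
        have hyc : y ∈ Icc u v := Ioc_subset_Icc_self hy
        rw [Real.norm_eq_abs, hT1def]
        simp only []
        rw [abs_mul]
        exact mul_le_mul (hHub y) (hgψb y hyc) (abs_nonneg _) (by positivity))
    rw [Real.norm_eq_abs] at h11
    refine le_trans h11 ?_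
    rw [abs_of_nonneg (by linarith : (0:ℝ) ≤ v - u)]
    have hTB0 : (0:ℝ) ≤ (T * Bc) * (Cg * Λ⁻¹) := by positivity
    nlinarith [hlen]
  have habs_ioc : ∀ (f : ℝ → ℝ), |∫ y in Ioc u v, f y| ≤ ∫ y in Ioc u v, |f y| := by
    intro f
    simpa [Real.norm_eq_abs] using
      MeasureTheory.norm_integral_le_integral_norm (μ := volume.restrict (Ioc u v)) f
  have hintdg : IntegrableOn (fun y => |deriv g y|) (Ioc u v) := by
    refine Integrable.mono' (g := fun _ => (K : ℝ)) (integrableOn_const hIocfin.ne)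
      ((measurable_deriv g).abs.aestronglyMeasurable) ?_
    filter_upwards with y
    rw [Real.norm_eq_abs, abs_abs]
    exact hKd y
  have hb3 : |∫ y in u..v, T3 y| ≤ (T * A) * Λ⁻¹ * (Dg * (v - u)) := by
    rw [integral_of_le huv]
    refine le_trans (habs_ioc T3) ?_
    have hint1 : IntegrableOn (fun y => |T3 y|) (Ioc u v) :=
      ((intervalIntegrable_iff_integrableOn_Ioc_of_le huv).1 hT3int).abs
    have hint2 : IntegrableOn (fun y => (T * A) * Λ⁻¹ * |deriv g y|) (Ioc u v) :=
      hintdg.const_mul _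
    calc ∫ y in Ioc u v, |T3 y| ≤ ∫ y in Ioc u v, (T * A) * Λ⁻¹ * |deriv g y| := by
          refine setIntegral_mono_on hint1 hint2 measurableSet_Ioc ?_
          intro y hy
          have hyc : y ∈ Icc u v := Ioc_subset_Icc_self hy
          calc |T3 y| = |G y| * (|deriv g y| * |ψ y|) := by
                rw [hT3def]; simp only []; rw [abs_mul, abs_mul]
            _ ≤ (T * A) * (|deriv g y| * Λ⁻¹) := by
                refine mul_le_mul (hGb y) ?_ (by positivity) hTA0
                exact mul_le_mul le_rfl (hψb y hyc) (abs_nonneg _) (abs_nonneg _)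
            _ = (T * A) * Λ⁻¹ * |deriv g y| := by ring
      _ ≤ ∫ y in Ioc u v, (T * A) * Λ⁻¹ * Dg := by
          refine setIntegral_mono_ae hint2 (integrableOn_const hIocfin.ne) ?_
          filter_upwards [hDgae] with y hDy
          exact mul_le_mul_of_nonneg_left hDy (by positivity)
      _ = (T * A) * Λ⁻¹ * Dg * (v - u) := by
          rw [setIntegral_const, Real.volume_real_Ioc_of_le huv, smul_eq_mul]
          ring
      _ = (T * A) * Λ⁻¹ * (Dg * (v - u)) := by ring
  have hintψ' : IntegrableOn (fun y => |deriv ψ y|) (Ioc u v) := by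
    have h12 : IntegrableOn (fun y => ‖deriv ψ y‖) (Icc u v) volume :=
      (hψ'cont.norm).integrableOn_Icc
    have h13 : IntegrableOn (fun y => |deriv ψ y|) (Icc u v) volume := by
      simpa [Real.norm_eq_abs] using h12
    exact h13.mono_set Ioc_subset_Icc_self
  have hb4 : |∫ y in u..v, T4 y| ≤ (T * A) * Cg * M := by
    rw [integral_of_le huv]
    refine le_trans (habs_ioc T4) ?_
    have hint1 : IntegrableOn (fun y => |T4 y|) (Ioc u v) :=
      ((intervalIntegrable_iff_integrableOn_Ioc_of_le huv).1 hT4int).abs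
    calc ∫ y in Ioc u v, |T4 y| ≤ ∫ y in Ioc u v, (T * A) * Cg * |deriv ψ y| := by
          refine setIntegral_mono_on hint1 (hintψ'.const_mul _) measurableSet_Ioc ?_
          intro y hy
          have hyc : y ∈ Icc u v := Ioc_subset_Icc_self hy
          calc |T4 y| = |G y| * (|g y| * |deriv ψ y|) := by
                rw [hT4def]; simp only []; rw [abs_mul, abs_mul]
            _ ≤ (T * A) * (Cg * |deriv ψ y|) := by
                refine mul_le_mul (hGb y) ?_ (by positivity) hTA0
                exact mul_le_mul (hCg y) le_rfl (abs_nonneg _) hCg0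
            _ = (T * A) * Cg * |deriv ψ y| := by ring
      _ = (T * A) * Cg * ∫ y in Ioc u v, |deriv ψ y| := by
          rw [MeasureTheory.integral_const_mul]
      _ ≤ (T * A) * Cg * M := by
          refine mul_le_mul_of_nonneg_left hMIoc (by positivity)
  have hbP : |P v - P u| ≤ 2 * ((T * A) * (Cg * Λ⁻¹)) := by
    rw [sub_eq_add_neg]
    refine le_trans (abs_add_le _ _) ?_
    rw [abs_neg]
    have h13 := hPb v (right_mem_Icc.2 huv)
    have h14 := hPb u (left_mem_Icc.2 huv)
    linarith
  -- final combination
  have key : ∀ b1 b2 b3 : ℝ, 0 ≤ b2 → 0 ≤ b3 → b1 ≤ Λ⁻¹ + M → b2 ≤ A + Bc →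
      b3 ≤ Cg + Dg → b1 * b2 * b3 ≤ P3 := by
    intro b1 b2 b3 h2 h3 h4 h5 h6
    rw [hP3def]
    refine mul_le_mul (mul_le_mul h4 h5 h2 (by linarith)) h6 h3
      (mul_nonneg (by linarith) (by linarith))
  have hTT : T * T ≤ 49 := by nlinarith [hT0, hT7]
  have k1 : ((T * Bc) * (Cg * Λ⁻¹)) * T ≤ 49 * P3 := by
    have h := key Λ⁻¹ Bc Cg hB0 hCg0 (by linarith) (by linarith) (by linarith)
    have hX0 : 0 ≤ Λ⁻¹ * Bc * Cg := by positivity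
    calc ((T * Bc) * (Cg * Λ⁻¹)) * T = (T * T) * (Λ⁻¹ * Bc * Cg) := by ring
      _ ≤ 49 * (Λ⁻¹ * Bc * Cg) := mul_le_mul_of_nonneg_right hTT hX0
      _ ≤ 49 * P3 := by linarith
  have k3 : (T * A) * Λ⁻¹ * (Dg * (v - u)) ≤ 49 * P3 := by
    have h := key Λ⁻¹ A Dg hA0 hDg0 (by linarith) (by linarith) (by linarith)
    have hX0 : 0 ≤ Λ⁻¹ * A * Dg := by positivity
    have hvu0 : (0:ℝ) ≤ v - u := by linarith
    have hTvu : T * (v - u) ≤ 49 := by nlinarith [hT0, hT7, hlen]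
    have hTvu0 : 0 ≤ T * (v - u) := by positivity
    calc (T * A) * Λ⁻¹ * (Dg * (v - u)) = (T * (v - u)) * (Λ⁻¹ * A * Dg) := by ring
      _ ≤ 49 * (Λ⁻¹ * A * Dg) := mul_le_mul_of_nonneg_right hTvu hX0
      _ ≤ 49 * P3 := by linarith
  have k4 : (T * A) * Cg * M ≤ 49 * P3 := by
    have h := key M A Cg hA0 hCg0 (by linarith) (by linarith) (by linarith)
    have hX0 : 0 ≤ M * A * Cg := by positivity
    calc (T * A) * Cg * M = T * (M * A * Cg) := by ring
      _ ≤ 49 * (M * A * Cg) := mul_le_mul_of_nonneg_right (by linarith) hX0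
      _ ≤ 49 * P3 := by linarith
  have kP : 2 * ((T * A) * (Cg * Λ⁻¹)) ≤ 49 * P3 := by
    have h := key Λ⁻¹ A Cg hA0 hCg0 (by linarith) (by linarith) (by linarith)
    have hX0 : 0 ≤ Λ⁻¹ * A * Cg := by positivity
    calc 2 * ((T * A) * (Cg * Λ⁻¹)) = (2 * T) * (Λ⁻¹ * A * Cg) := by ring
      _ ≤ 49 * (Λ⁻¹ * A * Cg) := mul_le_mul_of_nonneg_right (by linarith) hX0
      _ ≤ 49 * P3 := by linarith
  rw [hintJ, hsplit, hgoal_eq]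
  have htri : |(∫ y in u..v, T1 y) + (∫ y in u..v, T3 y) + (∫ y in u..v, T4 y) - (P v - P u)|
      ≤ |∫ y in u..v, T1 y| + |∫ y in u..v, T3 y| + |∫ y in u..v, T4 y| + |P v - P u| := by
    rw [sub_eq_add_neg]
    refine le_trans (abs_add_le _ _) ?_
    rw [abs_neg]
    refine add_le_add (le_trans (abs_add_le _ _) (add_le_add (abs_add_le _ _) le_rfl)) le_rfl
  linarith [htri, hb1, hb3, hb4, hbP, k1, k3, k4, kP]
end

section
/- Mean-zero cancellation along a nearly horizontal graph. Let f0 : ℝ² → ℝ be 2π-periodic in its first variable, differentiable in its second variable with ‖∂_y f0‖_∞ := sup_{x,y} |∂_y f0(x,y)| < ∞, and satisfy ∫_0^{2π} f0(x,y) dx = 0 for every y. Let ε > 0 and let h : [0,2π] → ℝ be differentiable with |h'(x)| ≤ ε for all x. Then | ∫_0^{2π} f0(x, h(x)) dx | ≤ 4π² ε ‖∂_y f0‖_∞. -/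
open MeasureTheory Set

/-! Subtracting `∫ f0 x (h 0) dx = 0` turns the integrand into `f0 x (h x) - f0 x (h 0)`, which
is at most `K |h x - h 0| ≤ K ε 2π` pointwise because `f0 x` is `K`-Lipschitz and the graph of `h`
stays within `ε 2π` of the height `h 0`; integrating over a period gives `K ε (2π)²`. -/

theorem abs_integral_graph_le_of_integral_eq_zero {f : ℝ → ℝ → ℝ} {g : ℝ → ℝ} {a b c K δ : ℝ}
    (hab : a ≤ b) (hK : 0 ≤ K) (hlip : ∀ x y z, |f x y - f x z| ≤ K * |y - z|)
    (hmean : ∫ x in a..b, f x c = 0)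
    (hint : IntervalIntegrable (fun x => f x c) volume a b)
    (hintg : IntervalIntegrable (fun x => f x (g x)) volume a b)
    (hg : ∀ x ∈ Icc a b, |g x - c| ≤ δ) :
    |∫ x in a..b, f x (g x)| ≤ K * δ * (b - a) := by
  have hsub : ∫ x in a..b, f x (g x) = ∫ x in a..b, (f x (g x) - f x c) := by
    rw [intervalIntegral.integral_sub hintg hint, hmean, sub_zero]
  have hbound : ∀ x ∈ uIoc a b, ‖f x (g x) - f x c‖ ≤ K * δ := fun x hx => by
    rw [uIoc_of_le hab] at hx
    exact (hlip x (g x) c).trans (mul_le_mul_of_nonneg_left (hg x (Ioc_subset_Icc_self hx)) hK)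
  simpa only [hsub, Real.norm_eq_abs, abs_of_nonneg (sub_nonneg.2 hab)] using
    intervalIntegral.norm_integral_le_of_norm_le_const hbound

theorem mean_zero_cancellation_graph_general
    (f0 : ℝ → ℝ → ℝ)
    (hdiff : ∀ x : ℝ, Differentiable ℝ (f0 x))
    (K : ℝ) (hK : ∀ x y : ℝ, |deriv (f0 x) y| ≤ K)
    (hmean : ∀ y : ℝ, (∫ x in (0:ℝ)..(2 * Real.pi), f0 x y) = 0)
    (hint : ∀ y : ℝ, IntervalIntegrable (fun x => f0 x y) volume 0 (2 * Real.pi))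
    (ε : ℝ)
    (h h' : ℝ → ℝ)
    (hh : ∀ x ∈ Set.Icc (0:ℝ) (2 * Real.pi),
      HasDerivWithinAt h (h' x) (Set.Icc (0:ℝ) (2 * Real.pi)) x)
    (hh' : ∀ x ∈ Set.Icc (0:ℝ) (2 * Real.pi), |h' x| ≤ ε)
    (hinth : IntervalIntegrable (fun x => f0 x (h x)) volume 0 (2 * Real.pi)) :
    |∫ x in (0:ℝ)..(2 * Real.pi), f0 x (h x)|
      ≤ 4 * Real.pi ^ 2 * ε * K := by
  have hπ : (0:ℝ) ≤ 2 * Real.pi := by positivity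
  have hK0 : 0 ≤ K := (abs_nonneg _).trans (hK 0 0)
  have hlip : ∀ x y z, |f0 x y - f0 x z| ≤ K * |y - z| := fun x y z =>
    convex_univ.norm_image_sub_le_of_norm_deriv_le (fun _ _ => (hdiff x).differentiableAt)
      (fun w _ => hK x w) (mem_univ z) (mem_univ y)
  have hdev : ∀ x ∈ Icc 0 (2 * Real.pi), |h x - h 0| ≤ ε * (2 * Real.pi) := fun x hx => by
    have hslope := norm_image_sub_le_of_norm_deriv_le_segment' hh
      (fun y hy => hh' y (Ico_subset_Icc_self hy)) x hx
    have hε : 0 ≤ ε := (abs_nonneg _).trans (hh' 0 ⟨le_rfl, hπ⟩)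
    rw [Real.norm_eq_abs, sub_zero] at hslope
    exact hslope.trans (mul_le_mul_of_nonneg_left hx.2 hε)
  calc |∫ x in (0:ℝ)..(2 * Real.pi), f0 x (h x)|
      ≤ K * (ε * (2 * Real.pi)) * (2 * Real.pi - 0) :=
        abs_integral_graph_le_of_integral_eq_zero hπ hK0 hlip (hmean (h 0)) (hint (h 0)) hinth hdev
    _ = 4 * Real.pi ^ 2 * ε * K := by ring

/-- **Mean-zero cancellation along a nearly horizontal graph.**
If `f0` is `2π`-periodic and mean-zero in `x`, with `|∂_y f0| ≤ K`, and `h` is a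
graph with slope `|h'| ≤ ε` on `[0,2π]`, then the integral of `f0` along the graph
of `h` over one horizontal period is of size at most `4π²εK`.  (The integrability
hypotheses make the integrals in the statement meaningful.) -/
theorem mean_zero_cancellation_graph
    (f0 : ℝ → ℝ → ℝ)
    (hper : ∀ x y : ℝ, f0 (x + 2 * Real.pi) y = f0 x y)
    (hdiff : ∀ x : ℝ, Differentiable ℝ (f0 x))
    (K : ℝ) (hK : ∀ x y : ℝ, |deriv (f0 x) y| ≤ K)
    (hmean : ∀ y : ℝ, (∫ x in (0:ℝ)..(2 * Real.pi), f0 x y) = 0)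
    (hint : ∀ y : ℝ, IntervalIntegrable (fun x => f0 x y) volume 0 (2 * Real.pi))
    (ε : ℝ) (hε : 0 < ε)
    (h h' : ℝ → ℝ)
    (hh : ∀ x ∈ Set.Icc (0:ℝ) (2 * Real.pi),
      HasDerivWithinAt h (h' x) (Set.Icc (0:ℝ) (2 * Real.pi)) x)
    (hh' : ∀ x ∈ Set.Icc (0:ℝ) (2 * Real.pi), |h' x| ≤ ε)
    (hinth : IntervalIntegrable (fun x => f0 x (h x)) volume 0 (2 * Real.pi)) :
    |∫ x in (0:ℝ)..(2 * Real.pi), f0 x (h x)|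
      ≤ 4 * Real.pi ^ 2 * ε * K :=
  mean_zero_cancellation_graph_general f0 hdiff K hK hmean hint ε h h' hh hh' hinth
end
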